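/- arXiv:math/9803092 — 2 statements merged into one kernel-verified Lean document; each statement's English description precedes it below -/
import Mathlib

section
/- Let h : A(DT²_q) → ℂ be the ℂ-linear functional defined on the basis {Dᵐaⁿ, Dᵐdⁿ, Dᵐbⁿ, Dᵐcⁿ (m ∈ ℤ, n ≥ 1); Dᵐz, Dᵐ(1−z) (m ∈ ℤ)} of A(DT²_q) by h(z) = h(1−z) = 1/2 and h = 0 on all other basis elements (in particular h(Dᵐz) = h(Dᵐ(1−z)) = 0 for m ≠ 0 and h(Dᵐaⁿ) = h(Dᵐbⁿ) = h(Dᵐcⁿ) = h(Dᵐdⁿ) = 0). Then h(1) = 1 and h is a two-sided invariant (Haar) functional: (id⊗h)(Δ(p)) = h(p)·1 and (h⊗id)(Δ(p)) = h(p)·1 for all p ∈ A(DT²_q). -/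
open scoped TensorProduct
noncomputable section
namespace QDT

/-- generators a, b, c, d, D, D⁻¹ -/
inductive Gen : Type | a | b | c | d | D | Di

open FreeAlgebra in
/-- Defining relations of `A(U_{q⁻¹,q}(2))` (for `q ∈ U(1)`). -/
inductive URel (q : ℂ) : FreeAlgebra ℂ Gen → FreeAlgebra ℂ Gen → Prop
  | ab : URel q (ι ℂ Gen.a * ι ℂ Gen.b) (q⁻¹ • (ι ℂ Gen.b * ι ℂ Gen.a))
  | cd : URel q (ι ℂ Gen.c * ι ℂ Gen.d) (q⁻¹ • (ι ℂ Gen.d * ι ℂ Gen.c))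
  | ac : URel q (ι ℂ Gen.a * ι ℂ Gen.c) (q • (ι ℂ Gen.c * ι ℂ Gen.a))
  | bd : URel q (ι ℂ Gen.b * ι ℂ Gen.d) (q • (ι ℂ Gen.d * ι ℂ Gen.b))
  | ad : URel q (ι ℂ Gen.a * ι ℂ Gen.d) (ι ℂ Gen.d * ι ℂ Gen.a)
  | bc : URel q (ι ℂ Gen.b * ι ℂ Gen.c) ((q ^ 2) • (ι ℂ Gen.c * ι ℂ Gen.b))
  | DDi : URel q (ι ℂ Gen.D * ι ℂ Gen.Di) 1
  | DiD : URel q (ι ℂ Gen.Di * ι ℂ Gen.D) 1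
  | det : URel q (ι ℂ Gen.a * ι ℂ Gen.d - q⁻¹ • (ι ℂ Gen.b * ι ℂ Gen.c)) (ι ℂ Gen.D)

/-- The coordinate ring `A(U_{q⁻¹,q}(2))`, as the algebra presented by the above
generators and relations. -/
abbrev Uq (q : ℂ) : Type := RingQuot (URel q)

namespace Uq
variable (q : ℂ)
def a : Uq q := RingQuot.mkAlgHom ℂ (URel q) (FreeAlgebra.ι ℂ Gen.a)
def b : Uq q := RingQuot.mkAlgHom ℂ (URel q) (FreeAlgebra.ι ℂ Gen.b)
def c : Uq q := RingQuot.mkAlgHom ℂ (URel q) (FreeAlgebra.ι ℂ Gen.c)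
def d : Uq q := RingQuot.mkAlgHom ℂ (URel q) (FreeAlgebra.ι ℂ Gen.d)
def D : Uq q := RingQuot.mkAlgHom ℂ (URel q) (FreeAlgebra.ι ℂ Gen.D)
def Di : Uq q := RingQuot.mkAlgHom ℂ (URel q) (FreeAlgebra.ι ℂ Gen.Di)
/-- `z := D⁻¹ a d`. -/
def z : Uq q := Di q * (a q * d q)
/-- `D^k` for `k ∈ ℤ`. -/
def Dz (k : ℤ) : Uq q := if 0 ≤ k then (D q) ^ k.toNat else (Di q) ^ (-k).toNat
end Uq

/-- The relations `ab = 0, ac = 0, cd = 0, bd = 0`; dividing by them realizes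
the quotient of `A(U_{q⁻¹,q}(2))` by the two-sided ideal generated by `{ab, ac, cd, bd}`. -/
inductive DRel (q : ℂ) : Uq q → Uq q → Prop
  | ab : DRel q (Uq.a q * Uq.b q) 0
  | ac : DRel q (Uq.a q * Uq.c q) 0
  | cd : DRel q (Uq.c q * Uq.d q) 0
  | bd : DRel q (Uq.b q * Uq.d q) 0

/-- The coordinate ring `A(DT²_q)` of the quantum double-torus: the quotient of
`A(U_{q⁻¹,q}(2))` by the two-sided ideal generated by `{ab, ac, cd, bd}`. -/
abbrev ADT (q : ℂ) : Type := RingQuot (DRel q)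

namespace ADT
variable (q : ℂ)
/-- The canonical projection `A(U_{q⁻¹,q}(2)) → A(DT²_q)`. -/
def mk : Uq q →ₐ[ℂ] ADT q := RingQuot.mkAlgHom ℂ (DRel q)
def a : ADT q := mk q (Uq.a q)
def b : ADT q := mk q (Uq.b q)
def c : ADT q := mk q (Uq.c q)
def d : ADT q := mk q (Uq.d q)
def D : ADT q := mk q (Uq.D q)
def Di : ADT q := mk q (Uq.Di q)
/-- `z := D⁻¹ a d ∈ A(DT²_q)`. -/
def z : ADT q := Di q * (a q * d q)
/-- `D^m` for `m ∈ ℤ`. -/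
def Dz (m : ℤ) : ADT q := if 0 ≤ m then (D q) ^ m.toNat else (Di q) ^ (-m).toNat
end ADT

/- quantum torus -/
inductive TGen : Type | x | xi | y | yi

open FreeAlgebra in
/-- Defining relations of the quantum torus `A(T²_r)`:
`x x⁻¹ = x⁻¹ x = y y⁻¹ = y⁻¹ y = 1` and `xy = r yx`. -/
inductive TRel (r : ℂ) : FreeAlgebra ℂ TGen → FreeAlgebra ℂ TGen → Prop
  | xxi : TRel r (ι ℂ TGen.x * ι ℂ TGen.xi) 1
  | xix : TRel r (ι ℂ TGen.xi * ι ℂ TGen.x) 1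
  | yyi : TRel r (ι ℂ TGen.y * ι ℂ TGen.yi) 1
  | yiy : TRel r (ι ℂ TGen.yi * ι ℂ TGen.y) 1
  | xy : TRel r (ι ℂ TGen.x * ι ℂ TGen.y) (r • (ι ℂ TGen.y * ι ℂ TGen.x))

/-- The quantum torus algebra `A(T²_r)`.  For `r = 1` this is the Laurent polynomial
algebra `A(T²) = ℂ[u,u⁻¹,v,v⁻¹]` (we write `u := x`, `v := y`). -/
abbrev AT (r : ℂ) : Type := RingQuot (TRel r)

namespace AT
variable (r : ℂ)
def x : AT r := RingQuot.mkAlgHom ℂ (TRel r) (FreeAlgebra.ι ℂ TGen.x)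
def xi : AT r := RingQuot.mkAlgHom ℂ (TRel r) (FreeAlgebra.ι ℂ TGen.xi)
def y : AT r := RingQuot.mkAlgHom ℂ (TRel r) (FreeAlgebra.ι ℂ TGen.y)
def yi : AT r := RingQuot.mkAlgHom ℂ (TRel r) (FreeAlgebra.ι ℂ TGen.yi)
/-- `x^k` for `k ∈ ℤ`. -/
def xz (k : ℤ) : AT r := if 0 ≤ k then (x r) ^ k.toNat else (xi r) ^ (-k).toNat
/-- `y^l` for `l ∈ ℤ`. -/
def yz (l : ℤ) : AT r := if 0 ≤ l then (y r) ^ l.toNat else (yi r) ^ (-l).toNat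
/-- The monomial `x^k y^l` (i.e. `u^k v^l` when `r = 1`). -/
def uv (k l : ℤ) : AT r := xz r k * yz r l
end AT

/-- `A(T²)`, the Laurent polynomial algebra `ℂ[u,u⁻¹,v,v⁻¹]`, realized as the
quantum torus at `r = 1`; `u, v` are group-like. -/
abbrev AT2 : Type := AT 1
def AT2.u : AT2 := AT.x 1
def AT2.v : AT2 := AT.y 1

/-- `A(ℤ₂) = ℂ × ℂ`, the algebra of functions on `ℤ/2ℤ`. -/
abbrev AZ2 : Type := ℂ × ℂ
def AZ2.e0 : AZ2 := (1, 0)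
def AZ2.e1 : AZ2 := (0, 1)

/-- The value `j(u^k v^l)` of the cleaving map `j : A(T²) → A(DT²_q)`. -/
def jval (q : ℂ) (k l : ℤ) : ADT q :=
  if l < k then
    ADT.Dz q l * (ADT.a q ^ (k - l).toNat)
      + ((-1 : ℂ) ^ l * q ^ (l ^ 2)) • (ADT.Dz q l * (ADT.c q ^ (k - l).toNat))
  else if k = l then
    ADT.Dz q k * ADT.z q + ((-1 : ℂ) ^ k) • (ADT.Dz q (-k) * (1 - ADT.z q))
  else
    ((-1 : ℂ) ^ k * q ^ (-(k ^ 2))) • (ADT.Dz q k * (ADT.b q ^ (l - k).toNat))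
      + ADT.Dz q k * (ADT.d q ^ (l - k).toNat)

/-- The cocycle values `σ_q(k,l,m,n)`. -/
def sigmaq (q : ℂ) (k l m n : ℤ) : ℂ :=
  if l < k then
    (if n < m then q ^ (-(2 * k * n))
     else if m = n then q ^ (-(m * (2 * k + m)))
     else if l + n < k + m then q ^ (-(2 * n * (k + m)))
     else if k + m = l + n then q ^ ((k + m) * (2 * l - k - m))
     else q ^ (2 * l * (k + m)))
  else if k = l then
    (if n < m then q ^ (-(k * (k + 2 * n)))
     else if m = n then 1
     else q ^ (k * (k + 2 * m)))
  else
    (if n < m then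
      (if l + n < k + m then q ^ (-(2 * k * (l + n)))
       else if k + m = l + n then q ^ ((l + n) * (l + n - 2 * k))
       else q ^ (2 * m * (l + n)))
     else if m = n then q ^ (m * (m + 2 * l))
     else q ^ (2 * l * m))


/-! ### Hypothesis bundles: Hopf-algebra and `*`-structure data, characterized by
their values on the generators (these maps exist and are unique, cf. the paper). -/

/-- The Hopf structure of `A(U_{q⁻¹,q}(2))`: comultiplication, counit and antipode,
characterized by their values on the generators. -/
structure UqHopf (q : ℂ) where
  Δ : Uq q →ₐ[ℂ] Uq q ⊗[ℂ] Uq q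
  Δa : Δ (Uq.a q) = Uq.a q ⊗ₜ Uq.a q + Uq.b q ⊗ₜ Uq.c q
  Δb : Δ (Uq.b q) = Uq.a q ⊗ₜ Uq.b q + Uq.b q ⊗ₜ Uq.d q
  Δc : Δ (Uq.c q) = Uq.c q ⊗ₜ Uq.a q + Uq.d q ⊗ₜ Uq.c q
  Δd : Δ (Uq.d q) = Uq.c q ⊗ₜ Uq.b q + Uq.d q ⊗ₜ Uq.d q
  ΔD : Δ (Uq.D q) = Uq.D q ⊗ₜ Uq.D q
  ΔDi : Δ (Uq.Di q) = Uq.Di q ⊗ₜ Uq.Di q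
  ε : Uq q →ₐ[ℂ] ℂ
  εa : ε (Uq.a q) = 1
  εb : ε (Uq.b q) = 0
  εc : ε (Uq.c q) = 0
  εd : ε (Uq.d q) = 1
  εD : ε (Uq.D q) = 1
  εDi : ε (Uq.Di q) = 1
  S : Uq q →ₗ[ℂ] Uq q
  Sone : S 1 = 1
  Smul : ∀ p r : Uq q, S (p * r) = S r * S p
  Sa : S (Uq.a q) = Uq.Di q * Uq.d q
  Sb : S (Uq.b q) = -(q⁻¹ • (Uq.Di q * Uq.b q))
  Sc : S (Uq.c q) = -(q • (Uq.Di q * Uq.c q))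
  Sd : S (Uq.d q) = Uq.Di q * Uq.a q
  SD : S (Uq.D q) = Uq.Di q
  SDi : S (Uq.Di q) = Uq.D q

/-- The comultiplication and counit of `A(DT²_q)`, characterized by generator values. -/
structure ADTCoalg (q : ℂ) where
  Δ : ADT q →ₐ[ℂ] ADT q ⊗[ℂ] ADT q
  Δa : Δ (ADT.a q) = ADT.a q ⊗ₜ ADT.a q + ADT.b q ⊗ₜ ADT.c q
  Δb : Δ (ADT.b q) = ADT.a q ⊗ₜ ADT.b q + ADT.b q ⊗ₜ ADT.d q
  Δc : Δ (ADT.c q) = ADT.c q ⊗ₜ ADT.a q + ADT.d q ⊗ₜ ADT.c q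
  Δd : Δ (ADT.d q) = ADT.c q ⊗ₜ ADT.b q + ADT.d q ⊗ₜ ADT.d q
  ΔD : Δ (ADT.D q) = ADT.D q ⊗ₜ ADT.D q
  ΔDi : Δ (ADT.Di q) = ADT.Di q ⊗ₜ ADT.Di q
  ε : ADT q →ₐ[ℂ] ℂ
  εa : ε (ADT.a q) = 1
  εb : ε (ADT.b q) = 0
  εc : ε (ADT.c q) = 0
  εd : ε (ADT.d q) = 1
  εD : ε (ADT.D q) = 1
  εDi : ε (ADT.Di q) = 1

/-- The antipode of `A(DT²_q)`, a linear antimultiplicative map, characterized by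
its generator values. -/
structure ADTAntipode (q : ℂ) where
  S : ADT q →ₗ[ℂ] ADT q
  Sone : S 1 = 1
  Smul : ∀ p r : ADT q, S (p * r) = S r * S p
  Sa : S (ADT.a q) = ADT.Di q * ADT.d q
  Sb : S (ADT.b q) = -(q⁻¹ • (ADT.Di q * ADT.b q))
  Sc : S (ADT.c q) = -(q • (ADT.Di q * ADT.c q))
  Sd : S (ADT.d q) = ADT.Di q * ADT.a q
  SD : S (ADT.D q) = ADT.Di q
  SDi : S (ADT.Di q) = ADT.D q

/-- A `*`-structure (conjugate-linear antimultiplicative involution) on a ℂ-algebra. -/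
structure StarData (A : Type) [Ring A] [Algebra ℂ A] where
  st : A → A
  add : ∀ p r : A, st (p + r) = st p + st r
  smul : ∀ (c : ℂ) (p : A), st (c • p) = (starRingEnd ℂ c) • st p
  mul : ∀ p r : A, st (p * r) = st r * st p
  invol : ∀ p : A, st (st p) = p

/-- The `*`-structure of `A(DT²_q)`:
`a* = D⁻¹d`, `b* = −qD⁻¹c`, `c* = −q⁻¹D⁻¹b`, `d* = D⁻¹a`, `(D^{±1})* = D^{∓1}`. -/
structure ADTStar (q : ℂ) extends StarData (ADT q) where
  sta : st (ADT.a q) = ADT.Di q * ADT.d q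
  stb : st (ADT.b q) = -(q • (ADT.Di q * ADT.c q))
  stc : st (ADT.c q) = -(q⁻¹ • (ADT.Di q * ADT.b q))
  std : st (ADT.d q) = ADT.Di q * ADT.a q
  stD : st (ADT.D q) = ADT.Di q
  stDi : st (ADT.Di q) = ADT.D q

/-- The `*`-structure of the quantum torus: `x* = x⁻¹`, `y* = y⁻¹`. -/
structure ATStar (r : ℂ) extends StarData (AT r) where
  stx : st (AT.x r) = AT.xi r
  sty : st (AT.y r) = AT.yi r

/-- The Hopf algebra map `π : A(DT²_q) → A(T²)` "setting z = 1":
`π(a) = u`, `π(d) = v`, `π(b) = π(c) = 0`, `π(D^{±1}) = (uv)^{±1}`. -/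
structure PiMap (q : ℂ) where
  π : ADT q →ₐ[ℂ] AT2
  pa : π (ADT.a q) = AT2.u
  pb : π (ADT.b q) = 0
  pc : π (ADT.c q) = 0
  pd : π (ADT.d q) = AT2.v
  pD : π (ADT.D q) = AT2.u * AT2.v
  pDi : π (ADT.Di q) = AT.xi 1 * AT.yi 1

/-- The Hopf structure of `A(T²)`: `u`, `v` (and their inverses) are group-like. -/
structure AT2Coalg where
  Δ : AT2 →ₐ[ℂ] AT2 ⊗[ℂ] AT2
  Δu : Δ AT2.u = AT2.u ⊗ₜ AT2.u
  Δv : Δ AT2.v = AT2.v ⊗ₜ AT2.v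
  Δui : Δ (AT.xi 1) = AT.xi 1 ⊗ₜ AT.xi 1
  Δvi : Δ (AT.yi 1) = AT.yi 1 ⊗ₜ AT.yi 1
  ε : AT2 →ₐ[ℂ] ℂ
  εu : ε AT2.u = 1
  εv : ε AT2.v = 1
  εui : ε (AT.xi 1) = 1
  εvi : ε (AT.yi 1) = 1

/-- The Hopf structure of `A(ℤ₂)`. -/
structure Z2Hopf where
  Δ : AZ2 →ₐ[ℂ] AZ2 ⊗[ℂ] AZ2
  Δe0 : Δ AZ2.e0 = AZ2.e0 ⊗ₜ AZ2.e0 + AZ2.e1 ⊗ₜ AZ2.e1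
  Δe1 : Δ AZ2.e1 = AZ2.e0 ⊗ₜ AZ2.e1 + AZ2.e1 ⊗ₜ AZ2.e0
  ε : AZ2 →ₐ[ℂ] ℂ
  ε0 : ε AZ2.e0 = 1
  ε1 : ε AZ2.e1 = 0

/-- The Hopf algebra injection `i : A(ℤ₂) → A(DT²_q)`, `i(e₀) = z`, `i(e₁) = 1−z`. -/
structure IMap (q : ℂ) where
  i : AZ2 →ₐ[ℂ] ADT q
  ie0 : i AZ2.e0 = ADT.z q
  ie1 : i AZ2.e1 = 1 - ADT.z q

/-- The cleaving map `j : A(T²) → A(DT²_q)`, the linear map with `j(u^k v^l) = jval q k l`. -/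
structure JMap (q : ℂ) where
  j : AT2 →ₗ[ℂ] ADT q
  jv : ∀ k l : ℤ, j (AT.uv 1 k l) = jval q k l

/-- The convolution inverse `j⁻¹` of the cleaving map:
the linear map with `j⁻¹(u^k v^l) = (j(u^k v^l))⁻¹`. -/
structure JInvMap (q : ℂ) where
  jinv : AT2 →ₗ[ℂ] ADT q
  left : ∀ k l : ℤ, jinv (AT.uv 1 k l) * jval q k l = 1
  right : ∀ k l : ℤ, jval q k l * jinv (AT.uv 1 k l) = 1

/-- The Haar functional of `A(DT²_q)`: the linear functional vanishing on all
basis elements except `h(z) = h(1−z) = 1/2`. -/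
structure HaarData (q : ℂ) where
  h : ADT q →ₗ[ℂ] ℂ
  ha : ∀ (m : ℤ) (n : ℕ), 1 ≤ n → h (ADT.Dz q m * ADT.a q ^ n) = 0
  hb : ∀ (m : ℤ) (n : ℕ), 1 ≤ n → h (ADT.Dz q m * ADT.b q ^ n) = 0
  hc : ∀ (m : ℤ) (n : ℕ), 1 ≤ n → h (ADT.Dz q m * ADT.c q ^ n) = 0
  hd : ∀ (m : ℤ) (n : ℕ), 1 ≤ n → h (ADT.Dz q m * ADT.d q ^ n) = 0
  hz : ∀ m : ℤ, h (ADT.Dz q m * ADT.z q) = if m = 0 then 1/2 else 0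
  hoz : ∀ m : ℤ, h (ADT.Dz q m * (1 - ADT.z q)) = if m = 0 then 1/2 else 0

/-- `ℓ(p) = p₍₁₎ · j⁻¹(π(p₍₂₎))`, as a composite of linear maps. -/
def ellMap (q : ℂ) (Δ : ADT q →ₐ[ℂ] ADT q ⊗[ℂ] ADT q) (π : ADT q →ₐ[ℂ] AT2)
    (jinv : AT2 →ₗ[ℂ] ADT q) : ADT q →ₗ[ℂ] ADT q :=
  (LinearMap.mul' ℂ (ADT q)) ∘ₗ
    (TensorProduct.map LinearMap.id (jinv ∘ₗ π.toLinearMap)) ∘ₗ Δ.toLinearMap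
namespace Haar
open ADT

variable {q : ℂ}

lemma mk_urel2 {x y : FreeAlgebra ℂ Gen} (h : URel q x y) :
    ADT.mk q (RingQuot.mkAlgHom ℂ (URel q) x) = ADT.mk q (RingQuot.mkAlgHom ℂ (URel q) y) := by
  rw [RingQuot.mkAlgHom_rel _ h]

lemma ab0 : a q * b q = 0 := by
  have h := RingQuot.mkAlgHom_rel ℂ (DRel.ab (q := q))
  rw [map_mul, map_zero] at h; exact h
lemma ac0 : a q * c q = 0 := by
  have h := RingQuot.mkAlgHom_rel ℂ (DRel.ac (q := q))
  rw [map_mul, map_zero] at h; exact h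
lemma cd0 : c q * d q = 0 := by
  have h := RingQuot.mkAlgHom_rel ℂ (DRel.cd (q := q))
  rw [map_mul, map_zero] at h; exact h
lemma bd0 : b q * d q = 0 := by
  have h := RingQuot.mkAlgHom_rel ℂ (DRel.bd (q := q))
  rw [map_mul, map_zero] at h; exact h

lemma rel_ab : a q * b q = q⁻¹ • (b q * a q) := by
  have h := mk_urel2 (URel.ab (q := q))
  rw [map_mul, map_smul, map_mul, map_mul, map_smul, map_mul] at h; exact h
lemma rel_cd : c q * d q = q⁻¹ • (d q * c q) := by
  have h := mk_urel2 (URel.cd (q := q))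
  rw [map_mul, map_smul, map_mul, map_mul, map_smul, map_mul] at h; exact h
lemma rel_ac : a q * c q = q • (c q * a q) := by
  have h := mk_urel2 (URel.ac (q := q))
  rw [map_mul, map_smul, map_mul, map_mul, map_smul, map_mul] at h; exact h
lemma rel_bd : b q * d q = q • (d q * b q) := by
  have h := mk_urel2 (URel.bd (q := q))
  rw [map_mul, map_smul, map_mul, map_mul, map_smul, map_mul] at h; exact h
lemma rel_ad : a q * d q = d q * a q := by
  have h := mk_urel2 (URel.ad (q := q))
  rw [map_mul, map_mul, map_mul, map_mul] at h; exact h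
lemma rel_bc : b q * c q = (q ^ 2) • (c q * b q) := by
  have h := mk_urel2 (URel.bc (q := q))
  rw [map_mul, map_smul, map_mul, map_mul, map_smul, map_mul] at h; exact h
lemma rel_DDi : D q * Di q = 1 := by
  have h := mk_urel2 (URel.DDi (q := q))
  rw [map_mul, map_one, map_mul, map_one] at h; exact h
lemma rel_DiD : Di q * D q = 1 := by
  have h := mk_urel2 (URel.DiD (q := q))
  rw [map_mul, map_one, map_mul, map_one] at h; exact h
lemma rel_det : a q * d q - q⁻¹ • (b q * c q) = D q := by
  have h := mk_urel2 (URel.det (q := q))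
  rw [map_sub, map_mul, map_smul, map_mul, map_sub, map_mul, map_smul, map_mul] at h; exact h

end Haar
namespace Haar
open ADT

variable {q : ℂ}

/-! sub/neg bridges (instance-diamond-safe copies) -/
lemma mSub (x y z : ADT q) : x * (y - z) = x * y - x * z := mul_sub x y z
lemma subM (x y z : ADT q) : (x - y) * z = x * z - y * z := sub_mul x y z
lemma subSelf (x : ADT q) : x - x = 0 := sub_self x
lemma subZero (x : ADT q) : x - 0 = x := sub_zero x
lemma sSub (s : ℂ) (x y : ADT q) : s • (x - y) = s • x - s • y := smul_sub s x y
lemma subAddNeg (x y : ADT q) : x - y = x + (-1 : ℂ) • y := by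
  have h1 : x - y = x + -y := sub_eq_add_neg x y
  have h2 : -y = (-1 : ℂ) • y := (neg_one_smul ℂ y).symm
  rw [h2] at h1; exact h1
lemma D_eq : D q = a q * d q + (-q⁻¹ : ℂ) • (b q * c q) :=
  rel_det.symm.trans ((sub_eq_add_neg _ _).trans
    (congrArg (a q * d q + ·) (neg_smul q⁻¹ (b q * c q)).symm))

section
variable (hq : q ≠ 0)

lemma smul_cancel {A : Type*} [AddCommMonoid A] [Module ℂ A] {s : ℂ} (hs : s ≠ 0)
    {t : A} (h : s • t = 0) : t = 0 := by
  have := congrArg (fun u => s⁻¹ • u) h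
  simpa [smul_smul, inv_mul_cancel₀ hs] using this

include hq

lemma ba0 : b q * a q = 0 := by
  apply smul_cancel (inv_ne_zero hq); rw [← rel_ab]; exact ab0
lemma ca0 : c q * a q = 0 := by
  apply smul_cancel hq; rw [← rel_ac]; exact ac0
lemma dc0 : d q * c q = 0 := by
  apply smul_cancel (inv_ne_zero hq); rw [← rel_cd]; exact cd0
lemma db0 : d q * b q = 0 := by
  apply smul_cancel hq; rw [← rel_bd]; exact bd0

end

section
variable (hq : q ≠ 0)

-- primed (right-assoc) zero lemmas
lemma ab0' (x : ADT q) : a q * (b q * x) = 0 := by rw [← mul_assoc, ab0, zero_mul]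
lemma ac0' (x : ADT q) : a q * (c q * x) = 0 := by rw [← mul_assoc, ac0, zero_mul]
lemma cd0' (x : ADT q) : c q * (d q * x) = 0 := by rw [← mul_assoc, cd0, zero_mul]
lemma bd0' (x : ADT q) : b q * (d q * x) = 0 := by rw [← mul_assoc, bd0, zero_mul]
include hq in
lemma ba0' (x : ADT q) : b q * (a q * x) = 0 := by rw [← mul_assoc, ba0 hq, zero_mul]
include hq in
lemma ca0' (x : ADT q) : c q * (a q * x) = 0 := by rw [← mul_assoc, ca0 hq, zero_mul]
include hq in
lemma dc0' (x : ADT q) : d q * (c q * x) = 0 := by rw [← mul_assoc, dc0 hq, zero_mul]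
include hq in
lemma db0' (x : ADT q) : d q * (b q * x) = 0 := by rw [← mul_assoc, db0 hq, zero_mul]

lemma rel_da : d q * a q = a q * d q := rel_ad.symm
lemma rel_da' (x : ADT q) : d q * (a q * x) = a q * (d q * x) := by
  rw [← mul_assoc, rel_da, mul_assoc]
include hq in
lemma cb_eq : c q * b q = (q ^ 2)⁻¹ • (b q * c q) := by
  rw [rel_bc, smul_smul, inv_mul_cancel₀ (pow_ne_zero 2 hq), one_smul]
include hq in
lemma cb_eq' (x : ADT q) : c q * (b q * x) = (q ^ 2)⁻¹ • (b q * (c q * x)) := by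
  rw [← mul_assoc, cb_eq hq, smul_mul_assoc, mul_assoc]

lemma rel_DDi' (x : ADT q) : D q * (Di q * x) = x := by rw [← mul_assoc, rel_DDi, one_mul]
lemma rel_DiD' (x : ADT q) : Di q * (D q * x) = x := by rw [← mul_assoc, rel_DiD, one_mul]

include hq in
lemma aD_comm : a q * D q = D q * a q := by
  rw [D_eq]
  simp only [mul_add, add_mul, mul_smul_comm, smul_mul_assoc, mul_assoc,
    ab0, ab0', ca0 hq, ca0' hq, rel_da, rel_da', mul_zero, smul_zero, add_zero, zero_add, smul_add]

include hq in
lemma dD_comm : d q * D q = D q * d q := by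
  rw [D_eq]
  simp only [mul_add, add_mul, mul_smul_comm, smul_mul_assoc, mul_assoc,
    cd0, cd0', db0 hq, db0' hq, rel_da, rel_da', mul_zero, smul_zero, add_zero, zero_add, smul_add]

include hq in
lemma bD_comm : b q * D q = (q ^ 2) • (D q * b q) := by
  rw [D_eq]
  simp only [mul_add, add_mul, mul_smul_comm, smul_mul_assoc, mul_assoc,
    ba0 hq, ba0' hq, bd0, bd0', db0 hq, db0' hq, cb_eq hq, cb_eq' hq, mul_zero, smul_zero,
    add_zero, zero_add, smul_add, smul_smul]
  congr 1
  field_simp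
  try ring

include hq in
lemma cD_comm : c q * D q = (q ^ 2)⁻¹ • (D q * c q) := by
  rw [D_eq]
  simp only [mul_add, add_mul, mul_smul_comm, smul_mul_assoc, mul_assoc,
    ca0 hq, ca0' hq, cd0, cd0', dc0 hq, dc0' hq, cb_eq hq, cb_eq' hq, mul_zero, smul_zero,
    add_zero, zero_add, smul_add, smul_smul]
  congr 1
  ring

lemma Di_swap {x y : ADT q} (h : D q * x = y * D q) : x * Di q = Di q * y := by
  have h2 : Di q * (D q * x) * Di q = Di q * (y * D q) * Di q := by rw [h]
  rw [← mul_assoc, ← mul_assoc, rel_DiD, one_mul] at h2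
  rw [h2, mul_assoc, mul_assoc, rel_DDi, mul_one]

include hq in
lemma aDi_comm : a q * Di q = Di q * a q :=
  Di_swap (by rw [← aD_comm hq])
include hq in
lemma dDi_comm : d q * Di q = Di q * d q :=
  Di_swap (by rw [← dD_comm hq])
include hq in
lemma bDi_comm : b q * Di q = (q ^ 2)⁻¹ • (Di q * b q) := by
  have h : D q * b q = ((q ^ 2)⁻¹ • b q) * D q := by
    rw [smul_mul_assoc, bD_comm hq, smul_smul, inv_mul_cancel₀ (pow_ne_zero 2 hq), one_smul]
  have := Di_swap h
  rwa [mul_smul_comm] at this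
include hq in
lemma cDi_comm : c q * Di q = (q ^ 2) • (Di q * c q) := by
  have h : D q * c q = ((q ^ 2) • c q) * D q := by
    rw [smul_mul_assoc, cD_comm hq, smul_smul, mul_inv_cancel₀ (pow_ne_zero 2 hq), one_smul]
  have := Di_swap h
  rwa [mul_smul_comm] at this

end
end Haar
namespace Haar
open ADT

variable {q : ℂ}

lemma ad_eq : a q * d q = D q + q⁻¹ • (b q * c q) := (sub_eq_iff_eq_add (G := ADT q)).mp rel_det

lemma Dz_ad : D q * z q = a q * d q := rel_DDi' _

section
variable (hq : q ≠ 0)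
include hq

lemma ad_D_comm : (a q * d q) * D q = D q * (a q * d q) := by
  rw [mul_assoc, dD_comm hq, ← mul_assoc, aD_comm hq, mul_assoc]

lemma zD : z q * D q = a q * d q := by
  show (Di q * (a q * d q)) * D q = _
  rw [mul_assoc, ad_D_comm hq, rel_DiD']

lemma zD_comm : z q * D q = D q * z q := (zD hq).trans Dz_ad.symm

lemma zDi_comm : z q * Di q = Di q * z q := Di_swap (zD_comm hq).symm

lemma za : z q * a q = a q := by
  show Di q * (a q * d q) * a q = a q
  conv_rhs => rw [← rel_DiD' (q := q) (a q)]
  rw [mul_assoc]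
  congr 1
  rw [D_eq, add_mul, smul_mul_assoc, mul_assoc (b q) (c q), ca0 hq, mul_zero, smul_zero, add_zero]

lemma az : a q * z q = a q := by
  show a q * (Di q * (a q * d q)) = a q
  rw [← mul_assoc, aDi_comm hq, mul_assoc,
    show a q * (a q * d q) = (a q * d q) * a q from by rw [mul_assoc, rel_da],
    ← mul_assoc]
  exact za hq

lemma zd : z q * d q = d q := by
  show Di q * (a q * d q) * d q = d q
  conv_rhs => rw [← rel_DiD' (q := q) (d q)]
  rw [mul_assoc]
  congr 1
  rw [D_eq, add_mul, smul_mul_assoc, mul_assoc (b q) (c q), cd0, mul_zero, smul_zero, add_zero]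

lemma dz : d q * z q = d q := by
  show d q * (Di q * (a q * d q)) = d q
  rw [← mul_assoc, dDi_comm hq, mul_assoc,
    show d q * (a q * d q) = (a q * d q) * d q from by rw [← mul_assoc, rel_da],
    ← mul_assoc]
  exact zd hq

lemma zb : z q * b q = 0 := by
  show Di q * (a q * d q) * b q = 0
  rw [mul_assoc, mul_assoc, db0 hq, mul_zero, mul_zero]

lemma bz : b q * z q = 0 := by
  show b q * (Di q * (a q * d q)) = 0
  rw [← mul_assoc, bDi_comm hq, smul_mul_assoc, mul_assoc, ba0' hq, mul_zero, smul_zero]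

lemma zc : z q * c q = 0 := by
  show Di q * (a q * d q) * c q = 0
  rw [mul_assoc, mul_assoc, dc0 hq, mul_zero, mul_zero]

lemma cz : c q * z q = 0 := by
  show c q * (Di q * (a q * d q)) = 0
  rw [← mul_assoc, cDi_comm hq, smul_mul_assoc, mul_assoc, ca0' hq, mul_zero, smul_zero]

lemma zz : z q * z q = z q := by
  conv_lhs => rw [show z q * z q = z q * (Di q * (a q * d q)) from rfl,
    ← mul_assoc, zDi_comm hq, mul_assoc, ← mul_assoc (z q) (a q), za hq]
  rfl

end

/-! (1 - z) lemmas -/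
lemma z_add_oz : z q + (1 - z q) = 1 := add_sub_cancel (z q) 1

section
variable (hq : q ≠ 0)
include hq

lemma a_oz : a q * (1 - z q) = 0 := by
  rw [mSub, mul_one, az hq]; exact subSelf _
lemma oz_a : (1 - z q) * a q = 0 := by
  rw [subM, one_mul, za hq]; exact subSelf _
lemma d_oz : d q * (1 - z q) = 0 := by
  rw [mSub, mul_one, dz hq]; exact subSelf _
lemma oz_d : (1 - z q) * d q = 0 := by
  rw [subM, one_mul, zd hq]; exact subSelf _
lemma b_oz : b q * (1 - z q) = b q := by
  rw [mSub, mul_one, bz hq]; exact subZero _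
lemma oz_b : (1 - z q) * b q = b q := by
  rw [subM, one_mul, zb hq]; exact subZero _
lemma c_oz : c q * (1 - z q) = c q := by
  rw [mSub, mul_one, cz hq]; exact subZero _
lemma oz_c : (1 - z q) * c q = c q := by
  rw [subM, one_mul, zc hq]; exact subZero _
lemma z_oz : z q * (1 - z q) = 0 := by
  rw [mSub, mul_one, zz hq]; exact subSelf _
lemma oz_z : (1 - z q) * z q = 0 := by
  rw [subM, one_mul, zz hq]; exact subSelf _
lemma oz_oz : (1 - z q) * (1 - z q) = 1 - z q := by
  rw [mSub, mul_one, oz_z hq]; exact subZero _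
lemma oz_D_comm : (1 - z q) * D q = D q * (1 - z q) := by
  rw [subM, one_mul, mSub, mul_one, zD_comm hq]
lemma oz_Di_comm : (1 - z q) * Di q = Di q * (1 - z q) := by
  rw [subM, one_mul, mSub, mul_one, zDi_comm hq]

lemma bc_eq2 : b q * c q = q • (D q * z q) + (-q) • D q := by
  have h : D q * z q = D q + q⁻¹ • (b q * c q) := Dz_ad.trans ad_eq
  have h2 : q • (D q * z q) = q • D q + b q * c q := by
    rw [h, smul_add, smul_smul, mul_inv_cancel₀ hq, one_smul]
  rw [h2]
  module

lemma ozD_eq : D q * (1 - z q) = D q + (-1 : ℂ) • (D q * z q) := by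
  rw [mSub, mul_one, subAddNeg]

lemma bc_w : b q * c q = (-q) • (D q * (1 - z q)) := by
  rw [ozD_eq hq, smul_add, smul_smul, bc_eq2 hq]
  module

lemma cb_w : c q * b q = (-q⁻¹) • (D q * (1 - z q)) := by
  rw [cb_eq hq, bc_w hq, smul_smul]
  congr 1
  field_simp
  try ring

lemma Di_bc : Di q * (b q * c q) = (-q) • (1 - z q) := by
  rw [bc_w hq, mul_smul_comm, rel_DiD']

lemma Di_cb : Di q * (c q * b q) = (-q⁻¹) • (1 - z q) := by
  rw [cb_w hq, mul_smul_comm, rel_DiD']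

end
end Haar
namespace Haar
open ADT

variable {q : ℂ}

section

lemma pow_mul_zero_right {x y : ADT q} (h : x * y = 0) (n : ℕ) : x ^ (n + 1) * y = 0 := by
  rw [pow_succ, mul_assoc, h, mul_zero]
lemma mul_pow_zero_left {x y : ADT q} (h : x * y = 0) (m : ℕ) : x * y ^ (m + 1) = 0 := by
  rw [pow_succ' y m, ← mul_assoc, h, zero_mul]
lemma pow_mul_pow_zero {x y : ADT q} (h : x * y = 0) (n m : ℕ) :
    x ^ (n + 1) * y ^ (m + 1) = 0 := by
  rw [pow_succ' y m, ← mul_assoc, pow_mul_zero_right h, zero_mul]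

lemma comm_pow_left {x y : ADT q} {s : ℂ} (h : x * y = s • (y * x)) (n : ℕ) :
    x ^ n * y = s ^ n • (y * x ^ n) := by
  induction n with
  | zero => simp
  | succ n ih =>
    rw [pow_succ' x n, mul_assoc, ih, mul_smul_comm, ← mul_assoc, h, smul_mul_assoc,
      smul_smul, mul_assoc, ← pow_succ' x n, pow_succ s n, mul_comm (s ^ n) s]

lemma comm_pow_right {x y : ADT q} {s : ℂ} (h : x * y = s • (y * x)) (m : ℕ) :
    x * y ^ m = s ^ m • (y ^ m * x) := by
  induction m with
  | zero => simp
  | succ m ih =>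
    rw [pow_succ y m, ← mul_assoc, ih, smul_mul_assoc, mul_assoc, h, mul_smul_comm,
      smul_smul, ← mul_assoc, ← pow_succ y m, pow_succ s m]


end

/-! Dz machinery -/
def uD (q : ℂ) : (ADT q)ˣ := ⟨D q, Di q, rel_DDi, rel_DiD⟩

lemma Dz_nonneg {m : ℤ} (h : 0 ≤ m) : Dz q m = D q ^ m.toNat := if_pos h
lemma Dz_negat {m : ℤ} (h : ¬ 0 ≤ m) : Dz q m = Di q ^ (-m).toNat := if_neg h

lemma Dz_eq (m : ℤ) : Dz q m = ((uD q ^ m : (ADT q)ˣ) : ADT q) := by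
  rcases le_or_gt 0 m with h | h
  · lift m to ℕ using h
    rw [Dz_nonneg (by positivity)]
    rw [zpow_natCast, Units.val_pow_eq_pow_val, Int.toNat_natCast]
    rfl
  · obtain ⟨n, rfl⟩ : ∃ n : ℕ, m = -(n : ℤ) := ⟨m.natAbs, by omega⟩
    rw [Dz_negat (by omega)]
    rw [zpow_neg, zpow_natCast, ← inv_pow, Units.val_pow_eq_pow_val]
    simp only [neg_neg, Int.toNat_natCast]
    rfl

lemma Dz_add (m k : ℤ) : Dz q m * Dz q k = Dz q (m + k) := by
  rw [Dz_eq, Dz_eq, Dz_eq, ← Units.val_mul, ← zpow_add]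

lemma Dz_zero : Dz q 0 = 1 := by
  rw [Dz_nonneg le_rfl]; exact pow_zero _
lemma Dz_one : Dz q 1 = D q := by
  rw [Dz_nonneg (by norm_num)]; exact pow_one _
lemma Dz_neg_one : Dz q (-1) = Di q := by
  rw [Dz_negat (by norm_num), show (-(-1 : ℤ)).toNat = 1 from rfl, pow_one]

lemma comm_Dz {x : ADT q} {s t : ℂ} (hD : x * D q = s • (D q * x))
    (hDi : x * Di q = t • (Di q * x)) (m : ℤ) :
    ∃ u : ℂ, x * Dz q m = u • (Dz q m * x) := by
  rcases le_or_gt 0 m with h | h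
  · rw [Dz_nonneg h]
    exact ⟨s ^ m.toNat, comm_pow_right hD _⟩
  · rw [Dz_negat (by omega)]
    exact ⟨t ^ (-m).toNat, comm_pow_right hDi _⟩

lemma comm_pow_exists {x y : ADT q} (h : ∃ u : ℂ, x * y = u • (y * x)) (n : ℕ) :
    ∃ u : ℂ, x ^ n * y = u • (y * x ^ n) :=
  h.elim fun u hu => ⟨u ^ n, comm_pow_left hu n⟩

section
variable (hq : q ≠ 0)
include hq

lemma aDz (m : ℤ) : ∃ u : ℂ, a q * Dz q m = u • (Dz q m * a q) :=
  comm_Dz (by rw [one_smul]; exact aD_comm hq) (by rw [one_smul]; exact aDi_comm hq) m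
lemma dDz (m : ℤ) : ∃ u : ℂ, d q * Dz q m = u • (Dz q m * d q) :=
  comm_Dz (by rw [one_smul]; exact dD_comm hq) (by rw [one_smul]; exact dDi_comm hq) m
lemma bDz (m : ℤ) : ∃ u : ℂ, b q * Dz q m = u • (Dz q m * b q) :=
  comm_Dz (bD_comm hq) (bDi_comm hq) m
lemma cDz (m : ℤ) : ∃ u : ℂ, c q * Dz q m = u • (Dz q m * c q) :=
  comm_Dz (cD_comm hq) (cDi_comm hq) m
lemma zDz (m : ℤ) : ∃ u : ℂ, z q * Dz q m = u • (Dz q m * z q) :=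
  comm_Dz (by rw [one_smul]; exact zD_comm hq) (by rw [one_smul]; exact zDi_comm hq) m
lemma ozDz (m : ℤ) : ∃ u : ℂ, (1 - z q) * Dz q m = u • (Dz q m * (1 - z q)) :=
  comm_Dz (by rw [one_smul]; exact oz_D_comm hq) (by rw [one_smul]; exact oz_Di_comm hq) m

/-! power absorption -/
lemma apow_z (n : ℕ) : a q ^ (n + 1) * z q = a q ^ (n + 1) := by
  rw [pow_succ, mul_assoc, az hq]
lemma z_apow (n : ℕ) : z q * a q ^ (n + 1) = a q ^ (n + 1) := by
  rw [pow_succ' (a q) n, ← mul_assoc, za hq]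
lemma dpow_z (n : ℕ) : d q ^ (n + 1) * z q = d q ^ (n + 1) := by
  rw [pow_succ, mul_assoc, dz hq]
lemma z_dpow (n : ℕ) : z q * d q ^ (n + 1) = d q ^ (n + 1) := by
  rw [pow_succ' (d q) n, ← mul_assoc, zd hq]
lemma bpow_oz (n : ℕ) : b q ^ (n + 1) * (1 - z q) = b q ^ (n + 1) := by
  rw [pow_succ, mul_assoc, b_oz hq]
lemma oz_bpow (n : ℕ) : (1 - z q) * b q ^ (n + 1) = b q ^ (n + 1) := by
  rw [pow_succ' (b q) n, ← mul_assoc, oz_b hq]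
lemma cpow_oz (n : ℕ) : c q ^ (n + 1) * (1 - z q) = c q ^ (n + 1) := by
  rw [pow_succ, mul_assoc, c_oz hq]
lemma oz_cpow (n : ℕ) : (1 - z q) * c q ^ (n + 1) = c q ^ (n + 1) := by
  rw [pow_succ' (c q) n, ← mul_assoc, oz_c hq]

end
end Haar
namespace Haar
open ADT

variable {q : ℂ}

def BS (q : ℂ) : Set (ADT q) :=
  {x | (∃ m : ℤ, ∃ n : ℕ, x = Dz q m * a q ^ (n+1) ∨ x = Dz q m * b q ^ (n+1) ∨
        x = Dz q m * c q ^ (n+1) ∨ x = Dz q m * d q ^ (n+1)) ∨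
      (∃ m : ℤ, x = Dz q m * z q ∨ x = Dz q m * (1 - z q))}

def S (q : ℂ) : Submodule ℂ (ADT q) := Submodule.span ℂ (BS q)

lemma mem_S_of_BS {x : ADT q} (h : x ∈ BS q) : x ∈ S q := Submodule.subset_span h
lemma mem_a (m : ℤ) (n : ℕ) : Dz q m * a q ^ (n+1) ∈ S q :=
  mem_S_of_BS (Or.inl ⟨m, n, Or.inl rfl⟩)
lemma mem_b (m : ℤ) (n : ℕ) : Dz q m * b q ^ (n+1) ∈ S q :=
  mem_S_of_BS (Or.inl ⟨m, n, Or.inr (Or.inl rfl)⟩)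
lemma mem_c (m : ℤ) (n : ℕ) : Dz q m * c q ^ (n+1) ∈ S q :=
  mem_S_of_BS (Or.inl ⟨m, n, Or.inr (Or.inr (Or.inl rfl))⟩)
lemma mem_d (m : ℤ) (n : ℕ) : Dz q m * d q ^ (n+1) ∈ S q :=
  mem_S_of_BS (Or.inl ⟨m, n, Or.inr (Or.inr (Or.inr rfl))⟩)
lemma mem_z (m : ℤ) : Dz q m * z q ∈ S q := mem_S_of_BS (Or.inr ⟨m, Or.inl rfl⟩)
lemma mem_oz (m : ℤ) : Dz q m * (1 - z q) ∈ S q := mem_S_of_BS (Or.inr ⟨m, Or.inr rfl⟩)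

lemma mem_apow (n : ℕ) : a q ^ (n+1) ∈ S q := by
  have := mem_a (q := q) 0 n; rwa [Dz_zero, one_mul] at this
lemma mem_bpow (n : ℕ) : b q ^ (n+1) ∈ S q := by
  have := mem_b (q := q) 0 n; rwa [Dz_zero, one_mul] at this
lemma mem_cpow (n : ℕ) : c q ^ (n+1) ∈ S q := by
  have := mem_c (q := q) 0 n; rwa [Dz_zero, one_mul] at this
lemma mem_dpow (n : ℕ) : d q ^ (n+1) ∈ S q := by
  have := mem_d (q := q) 0 n; rwa [Dz_zero, one_mul] at this
lemma mem_z0 : z q ∈ S q := by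
  have := mem_z (q := q) 0; rwa [Dz_zero, one_mul] at this
lemma mem_oz0 : 1 - z q ∈ S q := by
  have := mem_oz (q := q) 0; rwa [Dz_zero, one_mul] at this
lemma mem_one : (1 : ADT q) ∈ S q := by
  have h := add_mem (mem_z0 (q := q)) (mem_oz0 (q := q))
  rwa [z_add_oz] at h
lemma mem_gen_a : a q ∈ S q := by
  have := mem_apow (q := q) 0; rwa [pow_one] at this
lemma mem_gen_b : b q ∈ S q := by
  have := mem_bpow (q := q) 0; rwa [pow_one] at this
lemma mem_gen_c : c q ∈ S q := by
  have := mem_cpow (q := q) 0; rwa [pow_one] at this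
lemma mem_gen_d : d q ∈ S q := by
  have := mem_dpow (q := q) 0; rwa [pow_one] at this
lemma mem_D : D q ∈ S q := by
  have h := add_mem (mem_z (q := q) 1) (mem_oz (q := q) 1)
  rwa [← mul_add, z_add_oz, mul_one, Dz_one] at h
lemma mem_Di : Di q ∈ S q := by
  have h := add_mem (mem_z (q := q) (-1)) (mem_oz (q := q) (-1))
  rwa [← mul_add, z_add_oz, mul_one, Dz_neg_one] at h

lemma Dz_mul_mem (k : ℤ) {x : ADT q} (hx : x ∈ S q) : Dz q k * x ∈ S q := by
  induction hx using Submodule.span_induction with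
  | mem x hx =>
    obtain ⟨m, n, rfl | rfl | rfl | rfl⟩ | ⟨m, rfl | rfl⟩ := hx <;>
      rw [← mul_assoc, Dz_add]
    · exact mem_a _ _
    · exact mem_b _ _
    · exact mem_c _ _
    · exact mem_d _ _
    · exact mem_z _
    · exact mem_oz _
  | zero => rw [mul_zero]; exact zero_mem _
  | add x y _ _ hx hy => rw [mul_add]; exact add_mem hx hy
  | smul s x _ hx => rw [mul_smul_comm]; exact Submodule.smul_mem _ _ hx

lemma key_mul {m m' : ℤ} {u v : ADT q}
    (hc : ∃ s : ℂ, u * Dz q m' = s • (Dz q m' * u)) (huv : u * v ∈ S q) :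
    (Dz q m * u) * (Dz q m' * v) ∈ S q := by
  obtain ⟨s, hs⟩ := hc
  have h : (Dz q m * u) * (Dz q m' * v) = s • (Dz q m * (Dz q m' * (u * v))) := by
    rw [mul_assoc, ← mul_assoc u (Dz q m') v, hs, smul_mul_assoc, mul_assoc (Dz q m') u v,
      mul_smul_comm]
  rw [h]
  exact Submodule.smul_mem _ _ (Dz_mul_mem m (Dz_mul_mem m' huv))

section
variable (hq : q ≠ 0)
include hq

lemma apow_D (n : ℕ) : a q ^ n * D q = D q * a q ^ n := by
  have h := comm_pow_left (show a q * D q = (1:ℂ) • (D q * a q) from by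
    rw [one_smul]; exact aD_comm hq) n
  simpa using h
lemma bpow_D (n : ℕ) : b q ^ n * D q = ((q^2)^n) • (D q * b q ^ n) :=
  comm_pow_left (bD_comm hq) n
lemma cpow_D (n : ℕ) : c q ^ n * D q = (((q^2)⁻¹)^n) • (D q * c q ^ n) :=
  comm_pow_left (cD_comm hq) n

lemma ad_mem : ∀ n m : ℕ, a q ^ n * d q ^ m ∈ S q := by
  intro n
  induction n with
  | zero =>
    intro m; rw [pow_zero, one_mul]
    cases m with
    | zero => rw [pow_zero]; exact mem_one
    | succ m => exact mem_dpow m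
  | succ n ih =>
    intro m
    cases m with
    | zero => rw [pow_zero, mul_one]; exact mem_apow n
    | succ m =>
      have step : a q ^ (n+1) * d q ^ (m+1) = D q * (a q ^ n * (z q * d q ^ m)) := by
        rw [pow_succ (a q) n, pow_succ' (d q) m, mul_assoc (a q ^ n) (a q),
          ← mul_assoc (a q) (d q), ← Dz_ad, mul_assoc (D q) (z q),
          ← mul_assoc (a q ^ n) (D q), apow_D hq, mul_assoc]
      rw [step, ← Dz_one]
      apply Dz_mul_mem
      cases n with
      | zero =>
        rw [pow_zero, one_mul]
        cases m with
        | zero => rw [pow_zero, mul_one]; exact mem_z0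
        | succ m => rw [z_dpow hq]; exact mem_dpow m
      | succ n' =>
        cases m with
        | zero => rw [pow_zero, mul_one, apow_z hq]; exact mem_apow n'
        | succ m =>
          rw [z_dpow hq]
          exact ih (m+1)

lemma da_mem (m n : ℕ) : d q ^ m * a q ^ n ∈ S q := by
  have hcomm : Commute (d q) (a q) := rel_da
  rw [(hcomm.pow_pow m n).eq]
  exact ad_mem hq n m

lemma bc_mem : ∀ n m : ℕ, b q ^ n * c q ^ m ∈ S q := by
  intro n
  induction n with
  | zero =>
    intro m; rw [pow_zero, one_mul]
    cases m with
    | zero => rw [pow_zero]; exact mem_one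
    | succ m => exact mem_cpow m
  | succ n ih =>
    intro m
    cases m with
    | zero => rw [pow_zero, mul_one]; exact mem_bpow n
    | succ m =>
      rw [pow_succ (b q) n, pow_succ' (c q) m, mul_assoc (b q ^ n) (b q),
        ← mul_assoc (b q) (c q), bc_w hq, smul_mul_assoc, mul_smul_comm,
        mul_assoc (D q) (1 - z q), ← mul_assoc (b q ^ n) (D q), bpow_D hq,
        smul_mul_assoc, mul_assoc (D q) (b q ^ n)]
      apply Submodule.smul_mem
      apply Submodule.smul_mem
      rw [← Dz_one]
      apply Dz_mul_mem
      cases n with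
      | zero =>
        rw [pow_zero, one_mul]
        cases m with
        | zero => rw [pow_zero, mul_one]; exact mem_oz0
        | succ m => rw [oz_cpow hq]; exact mem_cpow m
      | succ n' =>
        cases m with
        | zero => rw [pow_zero, mul_one, bpow_oz hq]; exact mem_bpow n'
        | succ m =>
          rw [oz_cpow hq]
          exact ih (m+1)

lemma cb_mem : ∀ n m : ℕ, c q ^ n * b q ^ m ∈ S q := by
  intro n
  induction n with
  | zero =>
    intro m; rw [pow_zero, one_mul]
    cases m with
    | zero => rw [pow_zero]; exact mem_one
    | succ m => exact mem_bpow m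
  | succ n ih =>
    intro m
    cases m with
    | zero => rw [pow_zero, mul_one]; exact mem_cpow n
    | succ m =>
      rw [pow_succ (c q) n, pow_succ' (b q) m, mul_assoc (c q ^ n) (c q),
        ← mul_assoc (c q) (b q), cb_w hq, smul_mul_assoc, mul_smul_comm,
        mul_assoc (D q) (1 - z q), ← mul_assoc (c q ^ n) (D q), cpow_D hq,
        smul_mul_assoc, mul_assoc (D q) (c q ^ n)]
      apply Submodule.smul_mem
      apply Submodule.smul_mem
      rw [← Dz_one]
      apply Dz_mul_mem
      cases n with
      | zero =>
        rw [pow_zero, one_mul]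
        cases m with
        | zero => rw [pow_zero, mul_one]; exact mem_oz0
        | succ m => rw [oz_bpow hq]; exact mem_bpow m
      | succ n' =>
        cases m with
        | zero => rw [pow_zero, mul_one, cpow_oz hq]; exact mem_cpow n'
        | succ m =>
          rw [oz_bpow hq]
          exact ih (m+1)

lemma prod_mem {x y : ADT q} (hx : x ∈ BS q) (hy : y ∈ BS q) : x * y ∈ S q := by
  obtain ⟨m, n, rfl | rfl | rfl | rfl⟩ | ⟨m, rfl | rfl⟩ := hx <;>
    obtain ⟨k, j, rfl | rfl | rfl | rfl⟩ | ⟨k, rfl | rfl⟩ := hy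
  -- x = Dz m * a^(n+1)
  · exact key_mul (comm_pow_exists (aDz hq k) (n+1)) (by
      rw [← pow_add, show (n+1)+(j+1) = (n+j+1)+1 from by omega]; exact mem_apow _)
  · exact key_mul (comm_pow_exists (aDz hq k) (n+1)) (by
      rw [pow_mul_pow_zero ab0]; exact zero_mem _)
  · exact key_mul (comm_pow_exists (aDz hq k) (n+1)) (by
      rw [pow_mul_pow_zero ac0]; exact zero_mem _)
  · exact key_mul (comm_pow_exists (aDz hq k) (n+1)) (ad_mem hq (n+1) (j+1))
  · exact key_mul (comm_pow_exists (aDz hq k) (n+1)) (by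
      rw [apow_z hq]; exact mem_apow n)
  · exact key_mul (comm_pow_exists (aDz hq k) (n+1)) (by
      rw [pow_mul_zero_right (a_oz hq)]; exact zero_mem _)
  -- x = Dz m * b^(n+1)
  · exact key_mul (comm_pow_exists (bDz hq k) (n+1)) (by
      rw [pow_mul_pow_zero (ba0 hq)]; exact zero_mem _)
  · exact key_mul (comm_pow_exists (bDz hq k) (n+1)) (by
      rw [← pow_add, show (n+1)+(j+1) = (n+j+1)+1 from by omega]; exact mem_bpow _)
  · exact key_mul (comm_pow_exists (bDz hq k) (n+1)) (bc_mem hq (n+1) (j+1))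
  · exact key_mul (comm_pow_exists (bDz hq k) (n+1)) (by
      rw [pow_mul_pow_zero bd0]; exact zero_mem _)
  · exact key_mul (comm_pow_exists (bDz hq k) (n+1)) (by
      rw [pow_mul_zero_right (bz hq)]; exact zero_mem _)
  · exact key_mul (comm_pow_exists (bDz hq k) (n+1)) (by
      rw [bpow_oz hq]; exact mem_bpow n)
  -- x = Dz m * c^(n+1)
  · exact key_mul (comm_pow_exists (cDz hq k) (n+1)) (by
      rw [pow_mul_pow_zero (ca0 hq)]; exact zero_mem _)
  · exact key_mul (comm_pow_exists (cDz hq k) (n+1)) (cb_mem hq (n+1) (j+1))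
  · exact key_mul (comm_pow_exists (cDz hq k) (n+1)) (by
      rw [← pow_add, show (n+1)+(j+1) = (n+j+1)+1 from by omega]; exact mem_cpow _)
  · exact key_mul (comm_pow_exists (cDz hq k) (n+1)) (by
      rw [pow_mul_pow_zero cd0]; exact zero_mem _)
  · exact key_mul (comm_pow_exists (cDz hq k) (n+1)) (by
      rw [pow_mul_zero_right (cz hq)]; exact zero_mem _)
  · exact key_mul (comm_pow_exists (cDz hq k) (n+1)) (by
      rw [cpow_oz hq]; exact mem_cpow n)
  -- x = Dz m * d^(n+1)
  · exact key_mul (comm_pow_exists (dDz hq k) (n+1)) (da_mem hq (n+1) (j+1))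
  · exact key_mul (comm_pow_exists (dDz hq k) (n+1)) (by
      rw [pow_mul_pow_zero (db0 hq)]; exact zero_mem _)
  · exact key_mul (comm_pow_exists (dDz hq k) (n+1)) (by
      rw [pow_mul_pow_zero (dc0 hq)]; exact zero_mem _)
  · exact key_mul (comm_pow_exists (dDz hq k) (n+1)) (by
      rw [← pow_add, show (n+1)+(j+1) = (n+j+1)+1 from by omega]; exact mem_dpow _)
  · exact key_mul (comm_pow_exists (dDz hq k) (n+1)) (by
      rw [dpow_z hq]; exact mem_dpow n)
  · exact key_mul (comm_pow_exists (dDz hq k) (n+1)) (by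
      rw [pow_mul_zero_right (d_oz hq)]; exact zero_mem _)
  -- x = Dz m * z
  · exact key_mul (zDz hq k) (by rw [z_apow hq]; exact mem_apow j)
  · exact key_mul (zDz hq k) (by rw [mul_pow_zero_left (zb hq)]; exact zero_mem _)
  · exact key_mul (zDz hq k) (by rw [mul_pow_zero_left (zc hq)]; exact zero_mem _)
  · exact key_mul (zDz hq k) (by rw [z_dpow hq]; exact mem_dpow j)
  · exact key_mul (zDz hq k) (by rw [zz hq]; exact mem_z0)
  · exact key_mul (zDz hq k) (by rw [z_oz hq]; exact zero_mem _)
  -- x = Dz m * (1 - z)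
  · exact key_mul (ozDz hq k) (by rw [mul_pow_zero_left (oz_a hq)]; exact zero_mem _)
  · exact key_mul (ozDz hq k) (by rw [oz_bpow hq]; exact mem_bpow j)
  · exact key_mul (ozDz hq k) (by rw [oz_cpow hq]; exact mem_cpow j)
  · exact key_mul (ozDz hq k) (by rw [mul_pow_zero_left (oz_d hq)]; exact zero_mem _)
  · exact key_mul (ozDz hq k) (by rw [oz_z hq]; exact zero_mem _)
  · exact key_mul (ozDz hq k) (by rw [oz_oz hq]; exact mem_oz0)

lemma S_mul {x y : ADT q} (hx : x ∈ S q) (hy : y ∈ S q) : x * y ∈ S q := by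
  induction hx using Submodule.span_induction with
  | mem x hxm =>
    induction hy using Submodule.span_induction with
    | mem y hym => exact prod_mem hq hxm hym
    | zero => rw [mul_zero]; exact zero_mem _
    | add y1 y2 _ _ h1 h2 => rw [mul_add]; exact add_mem h1 h2
    | smul s y _ h => rw [mul_smul_comm]; exact Submodule.smul_mem _ _ h
  | zero => rw [zero_mul]; exact zero_mem _
  | add x1 x2 _ _ h1 h2 => rw [add_mul]; exact add_mem h1 h2
  | smul s x _ h => rw [smul_mul_assoc]; exact Submodule.smul_mem _ _ h

lemma S_top (x : ADT q) : x ∈ S q := by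
  have hsurj : Function.Surjective
      ((ADT.mk q).comp (RingQuot.mkAlgHom ℂ (URel q)) : FreeAlgebra ℂ Gen →ₐ[ℂ] ADT q) := by
    simp only [AlgHom.coe_comp]
    exact (RingQuot.mkAlgHom_surjective ℂ (DRel q)).comp (RingQuot.mkAlgHom_surjective ℂ (URel q))
  obtain ⟨w, rfl⟩ := hsurj x
  induction w using FreeAlgebra.induction with
  | grade0 r =>
    rw [AlgHom.commutes, Algebra.algebraMap_eq_smul_one]
    exact Submodule.smul_mem _ _ mem_one
  | grade1 g =>
    cases g with
    | a => exact mem_gen_a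
    | b => exact mem_gen_b
    | c => exact mem_gen_c
    | d => exact mem_gen_d
    | D => exact mem_D
    | Di => exact mem_Di
  | mul x y hx hy => rw [map_mul]; exact S_mul hq hx hy
  | add x y hx hy => rw [map_add]; exact add_mem hx hy

end
end Haar
namespace Haar
open ADT

variable {q : ℂ}

section coalg
variable (C : ADTCoalg q)

lemma ΔDz (m : ℤ) : C.Δ (Dz q m) = (Dz q m) ⊗ₜ[ℂ] (Dz q m) := by
  rcases le_or_gt 0 m with h | h
  · rw [Dz_nonneg h, map_pow, C.ΔD, Algebra.TensorProduct.tmul_pow]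
  · rw [Dz_negat (by omega), map_pow, C.ΔDi, Algebra.TensorProduct.tmul_pow]

variable (hq : q ≠ 0)
include hq

lemma Δ_apow (n : ℕ) : C.Δ (a q ^ (n+1)) =
    (a q ^ (n+1)) ⊗ₜ[ℂ] (a q ^ (n+1)) + (b q ^ (n+1)) ⊗ₜ[ℂ] (c q ^ (n+1)) := by
  induction n with
  | zero => rw [pow_one, pow_one, pow_one, C.Δa]
  | succ n ih =>
    rw [pow_succ (a q) (n+1), map_mul, ih, C.Δa]
    simp only [mul_add, add_mul, Algebra.TensorProduct.tmul_mul_tmul,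
      pow_mul_zero_right ab0, pow_mul_zero_right (ba0 hq),
      TensorProduct.zero_tmul, TensorProduct.tmul_zero, add_zero, zero_add]
    rw [← pow_succ (a q) (n+1), ← pow_succ (b q) (n+1), ← pow_succ (c q) (n+1)]

lemma Δ_bpow (n : ℕ) : C.Δ (b q ^ (n+1)) =
    (a q ^ (n+1)) ⊗ₜ[ℂ] (b q ^ (n+1)) + (b q ^ (n+1)) ⊗ₜ[ℂ] (d q ^ (n+1)) := by
  induction n with
  | zero => rw [pow_one, pow_one, pow_one, C.Δb]
  | succ n ih =>
    rw [pow_succ (b q) (n+1), map_mul, ih, C.Δb]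
    simp only [mul_add, add_mul, Algebra.TensorProduct.tmul_mul_tmul,
      pow_mul_zero_right ab0, pow_mul_zero_right (ba0 hq),
      TensorProduct.zero_tmul, TensorProduct.tmul_zero, add_zero, zero_add]
    rw [← pow_succ (a q) (n+1), ← pow_succ (b q) (n+1), ← pow_succ (d q) (n+1)]

lemma Δ_cpow (n : ℕ) : C.Δ (c q ^ (n+1)) =
    (c q ^ (n+1)) ⊗ₜ[ℂ] (a q ^ (n+1)) + (d q ^ (n+1)) ⊗ₜ[ℂ] (c q ^ (n+1)) := by
  induction n with
  | zero => rw [pow_one, pow_one, pow_one, C.Δc]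
  | succ n ih =>
    rw [pow_succ (c q) (n+1), map_mul, ih, C.Δc]
    simp only [mul_add, add_mul, Algebra.TensorProduct.tmul_mul_tmul,
      pow_mul_zero_right cd0, pow_mul_zero_right (dc0 hq),
      TensorProduct.zero_tmul, TensorProduct.tmul_zero, add_zero, zero_add]
    rw [← pow_succ (c q) (n+1), ← pow_succ (a q) (n+1), ← pow_succ (d q) (n+1)]

lemma Δ_dpow (n : ℕ) : C.Δ (d q ^ (n+1)) =
    (c q ^ (n+1)) ⊗ₜ[ℂ] (b q ^ (n+1)) + (d q ^ (n+1)) ⊗ₜ[ℂ] (d q ^ (n+1)) := by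
  induction n with
  | zero => rw [pow_one, pow_one, pow_one, C.Δd]
  | succ n ih =>
    rw [pow_succ (d q) (n+1), map_mul, ih, C.Δd]
    simp only [mul_add, add_mul, Algebra.TensorProduct.tmul_mul_tmul,
      pow_mul_zero_right cd0, pow_mul_zero_right (dc0 hq),
      TensorProduct.zero_tmul, TensorProduct.tmul_zero, add_zero, zero_add]
    rw [← pow_succ (c q) (n+1), ← pow_succ (b q) (n+1), ← pow_succ (d q) (n+1)]

lemma Δz : C.Δ (z q) = (z q) ⊗ₜ[ℂ] (z q) + (1 - z q) ⊗ₜ[ℂ] (1 - z q) := by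
  rw [show z q = Di q * (a q * d q) from rfl, map_mul, map_mul, C.ΔDi, C.Δa, C.Δd]
  simp only [mul_add, add_mul, Algebra.TensorProduct.tmul_mul_tmul,
    ac0, bd0, TensorProduct.zero_tmul, TensorProduct.tmul_zero, add_zero, zero_add]
  rw [Di_bc hq, Di_cb hq, ← TensorProduct.smul_tmul', TensorProduct.tmul_smul, smul_smul,
    show (-q) * (-q⁻¹) = 1 from by field_simp, one_smul, add_comm]
  rfl

end coalg

lemma span_top (hq : q ≠ 0) : Submodule.span ℂ (BS q) = ⊤ :=
  eq_top_iff.mpr fun x _ => S_top hq x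

lemma h_Dz (H : HaarData q) (m : ℤ) : H.h (Dz q m) = if m = 0 then 1 else 0 := by
  have e : Dz q m = Dz q m * z q + Dz q m * (1 - z q) := by
    rw [← mul_add, z_add_oz, mul_one]
  rw [e, map_add, H.hz m, H.hoz m]
  split <;> norm_num

section eval
variable (C : ADTCoalg q) (H : HaarData q)

def L1 : ADT q →ₗ[ℂ] ADT q :=
  (TensorProduct.rid ℂ (ADT q)).toLinearMap ∘ₗ
    (TensorProduct.map LinearMap.id H.h) ∘ₗ C.Δ.toLinearMap

def L2 : ADT q →ₗ[ℂ] ADT q :=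
  (TensorProduct.lid ℂ (ADT q)).toLinearMap ∘ₗ
    (TensorProduct.map H.h LinearMap.id) ∘ₗ C.Δ.toLinearMap

def R1 : ADT q →ₗ[ℂ] ADT q := H.h.smulRight 1

lemma cancel_half {x : ADT q} (hL : (1/2 : ℂ) • (1 : ADT q) + x = 1) :
    x = (1/2 : ℂ) • 1 := by
  have h2 : x = 1 - (1/2 : ℂ) • (1 : ADT q) := eq_sub_of_add_eq' (G := ADT q) hL
  rw [h2, subAddNeg, smul_smul]
  nth_rewrite 1 [← one_smul ℂ (1 : ADT q)]
  rw [← add_smul]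
  norm_num

lemma L1_tmul (x y : ADT q) :
    (TensorProduct.rid ℂ (ADT q)).toLinearMap
      ((TensorProduct.map (LinearMap.id : ADT q →ₗ[ℂ] ADT q) H.h) (x ⊗ₜ[ℂ] y))
      = H.h y • x := by
  rw [TensorProduct.map_tmul]
  simp [TensorProduct.rid_tmul]

lemma L2_tmul (x y : ADT q) :
    (TensorProduct.lid ℂ (ADT q)).toLinearMap
      ((TensorProduct.map H.h (LinearMap.id : ADT q →ₗ[ℂ] ADT q)) (x ⊗ₜ[ℂ] y))
      = H.h x • y := by
  rw [TensorProduct.map_tmul]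
  simp [TensorProduct.lid_tmul]

lemma L1_of_Δ {p x1 y1 x2 y2 : ADT q}
    (hΔ : C.Δ p = x1 ⊗ₜ[ℂ] y1 + x2 ⊗ₜ[ℂ] y2) :
    L1 C H p = H.h y1 • x1 + H.h y2 • x2 := by
  simp only [L1, LinearMap.comp_apply, AlgHom.toLinearMap_apply]
  rw [hΔ, map_add, map_add, L1_tmul, L1_tmul]

lemma L2_of_Δ {p x1 y1 x2 y2 : ADT q}
    (hΔ : C.Δ p = x1 ⊗ₜ[ℂ] y1 + x2 ⊗ₜ[ℂ] y2) :
    L2 C H p = H.h x1 • y1 + H.h x2 • y2 := by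
  simp only [L2, LinearMap.comp_apply, AlgHom.toLinearMap_apply]
  rw [hΔ, map_add, map_add, L2_tmul, L2_tmul]

variable (hq : q ≠ 0)
include hq

lemma Δ_Dz_a (m : ℤ) (n : ℕ) : C.Δ (Dz q m * a q ^ (n+1)) =
    (Dz q m * a q ^ (n+1)) ⊗ₜ[ℂ] (Dz q m * a q ^ (n+1))
      + (Dz q m * b q ^ (n+1)) ⊗ₜ[ℂ] (Dz q m * c q ^ (n+1)) := by
  rw [map_mul, ΔDz, Δ_apow C hq n, mul_add, Algebra.TensorProduct.tmul_mul_tmul,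
    Algebra.TensorProduct.tmul_mul_tmul]

lemma Δ_Dz_b (m : ℤ) (n : ℕ) : C.Δ (Dz q m * b q ^ (n+1)) =
    (Dz q m * a q ^ (n+1)) ⊗ₜ[ℂ] (Dz q m * b q ^ (n+1))
      + (Dz q m * b q ^ (n+1)) ⊗ₜ[ℂ] (Dz q m * d q ^ (n+1)) := by
  rw [map_mul, ΔDz, Δ_bpow C hq n, mul_add, Algebra.TensorProduct.tmul_mul_tmul,
    Algebra.TensorProduct.tmul_mul_tmul]

lemma Δ_Dz_c (m : ℤ) (n : ℕ) : C.Δ (Dz q m * c q ^ (n+1)) =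
    (Dz q m * c q ^ (n+1)) ⊗ₜ[ℂ] (Dz q m * a q ^ (n+1))
      + (Dz q m * d q ^ (n+1)) ⊗ₜ[ℂ] (Dz q m * c q ^ (n+1)) := by
  rw [map_mul, ΔDz, Δ_cpow C hq n, mul_add, Algebra.TensorProduct.tmul_mul_tmul,
    Algebra.TensorProduct.tmul_mul_tmul]

lemma Δ_Dz_d (m : ℤ) (n : ℕ) : C.Δ (Dz q m * d q ^ (n+1)) =
    (Dz q m * c q ^ (n+1)) ⊗ₜ[ℂ] (Dz q m * b q ^ (n+1))
      + (Dz q m * d q ^ (n+1)) ⊗ₜ[ℂ] (Dz q m * d q ^ (n+1)) := by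
  rw [map_mul, ΔDz, Δ_dpow C hq n, mul_add, Algebra.TensorProduct.tmul_mul_tmul,
    Algebra.TensorProduct.tmul_mul_tmul]

lemma Δ_Dz_z (m : ℤ) : C.Δ (Dz q m * z q) =
    (Dz q m * z q) ⊗ₜ[ℂ] (Dz q m * z q)
      + (Dz q m * (1 - z q)) ⊗ₜ[ℂ] (Dz q m * (1 - z q)) := by
  rw [map_mul, ΔDz, Δz C hq, mul_add, Algebra.TensorProduct.tmul_mul_tmul,
    Algebra.TensorProduct.tmul_mul_tmul]

lemma L1_a (m : ℤ) (n : ℕ) : L1 C H (Dz q m * a q ^ (n+1)) = 0 := by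
  rw [L1_of_Δ C H (Δ_Dz_a C hq m n), H.ha m (n+1) (by omega), H.hc m (n+1) (by omega),
    zero_smul, zero_smul, add_zero]
lemma L1_b (m : ℤ) (n : ℕ) : L1 C H (Dz q m * b q ^ (n+1)) = 0 := by
  rw [L1_of_Δ C H (Δ_Dz_b C hq m n), H.hb m (n+1) (by omega), H.hd m (n+1) (by omega),
    zero_smul, zero_smul, add_zero]
lemma L1_c (m : ℤ) (n : ℕ) : L1 C H (Dz q m * c q ^ (n+1)) = 0 := by
  rw [L1_of_Δ C H (Δ_Dz_c C hq m n), H.ha m (n+1) (by omega), H.hc m (n+1) (by omega),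
    zero_smul, zero_smul, add_zero]
lemma L1_d (m : ℤ) (n : ℕ) : L1 C H (Dz q m * d q ^ (n+1)) = 0 := by
  rw [L1_of_Δ C H (Δ_Dz_d C hq m n), H.hb m (n+1) (by omega), H.hd m (n+1) (by omega),
    zero_smul, zero_smul, add_zero]

lemma L2_a (m : ℤ) (n : ℕ) : L2 C H (Dz q m * a q ^ (n+1)) = 0 := by
  rw [L2_of_Δ C H (Δ_Dz_a C hq m n), H.ha m (n+1) (by omega), H.hb m (n+1) (by omega),
    zero_smul, zero_smul, add_zero]
lemma L2_b (m : ℤ) (n : ℕ) : L2 C H (Dz q m * b q ^ (n+1)) = 0 := by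
  rw [L2_of_Δ C H (Δ_Dz_b C hq m n), H.ha m (n+1) (by omega), H.hb m (n+1) (by omega),
    zero_smul, zero_smul, add_zero]
lemma L2_c (m : ℤ) (n : ℕ) : L2 C H (Dz q m * c q ^ (n+1)) = 0 := by
  rw [L2_of_Δ C H (Δ_Dz_c C hq m n), H.hc m (n+1) (by omega), H.hd m (n+1) (by omega),
    zero_smul, zero_smul, add_zero]
lemma L2_d (m : ℤ) (n : ℕ) : L2 C H (Dz q m * d q ^ (n+1)) = 0 := by
  rw [L2_of_Δ C H (Δ_Dz_d C hq m n), H.hc m (n+1) (by omega), H.hd m (n+1) (by omega),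
    zero_smul, zero_smul, add_zero]

lemma L1_z (m : ℤ) : L1 C H (Dz q m * z q) = (if m = 0 then (1/2 : ℂ) else 0) • 1 := by
  rw [L1_of_Δ C H (Δ_Dz_z C hq m), H.hz m, H.hoz m]
  rcases eq_or_ne m 0 with rfl | hm
  · simp only [if_pos rfl]
    rw [Dz_zero, one_mul, one_mul, ← smul_add, z_add_oz]
  · simp only [if_neg hm, zero_smul, add_zero]

lemma L2_z (m : ℤ) : L2 C H (Dz q m * z q) = (if m = 0 then (1/2 : ℂ) else 0) • 1 := by
  rw [L2_of_Δ C H (Δ_Dz_z C hq m), H.hz m, H.hoz m]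
  rcases eq_or_ne m 0 with rfl | hm
  · simp only [if_pos rfl]
    rw [Dz_zero, one_mul, one_mul, ← smul_add, z_add_oz]
  · simp only [if_neg hm, zero_smul, add_zero]

lemma L1_Dzm (m : ℤ) : L1 C H (Dz q m) = (if m = 0 then (1 : ℂ) else 0) • 1 := by
  have h1 : L1 C H (Dz q m) = H.h (Dz q m) • Dz q m := by
    simp only [L1, LinearMap.comp_apply, AlgHom.toLinearMap_apply]
    rw [ΔDz, L1_tmul]
  rw [h1, h_Dz H m]
  rcases eq_or_ne m 0 with rfl | hm
  · simp only [if_pos rfl]; rw [Dz_zero]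
  · simp only [if_neg hm, zero_smul]

lemma L2_Dzm (m : ℤ) : L2 C H (Dz q m) = (if m = 0 then (1 : ℂ) else 0) • 1 := by
  have h1 : L2 C H (Dz q m) = H.h (Dz q m) • Dz q m := by
    simp only [L2, LinearMap.comp_apply, AlgHom.toLinearMap_apply]
    rw [ΔDz, L2_tmul]
  rw [h1, h_Dz H m]
  rcases eq_or_ne m 0 with rfl | hm
  · simp only [if_pos rfl]; rw [Dz_zero]
  · simp only [if_neg hm, zero_smul]

lemma L1_oz (m : ℤ) : L1 C H (Dz q m * (1 - z q)) = (if m = 0 then (1/2 : ℂ) else 0) • 1 := by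
  have hadd : Dz q m * z q + Dz q m * (1 - z q) = Dz q m := by
    rw [← mul_add, z_add_oz, mul_one]
  have hL : L1 C H (Dz q m * z q) + L1 C H (Dz q m * (1 - z q)) = L1 C H (Dz q m) := by
    rw [← map_add, hadd]
  rw [L1_z C H hq m, L1_Dzm C H hq m] at hL
  rcases eq_or_ne m 0 with rfl | hm
  · rw [if_pos rfl, if_pos rfl, one_smul] at hL
    rw [if_pos rfl]
    exact cancel_half hL
  · simp only [if_neg hm, zero_smul] at hL ⊢
    rwa [zero_add] at hL

lemma L2_oz (m : ℤ) : L2 C H (Dz q m * (1 - z q)) = (if m = 0 then (1/2 : ℂ) else 0) • 1 := by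
  have hadd : Dz q m * z q + Dz q m * (1 - z q) = Dz q m := by
    rw [← mul_add, z_add_oz, mul_one]
  have hL : L2 C H (Dz q m * z q) + L2 C H (Dz q m * (1 - z q)) = L2 C H (Dz q m) := by
    rw [← map_add, hadd]
  rw [L2_z C H hq m, L2_Dzm C H hq m] at hL
  rcases eq_or_ne m 0 with rfl | hm
  · rw [if_pos rfl, if_pos rfl, one_smul] at hL
    rw [if_pos rfl]
    exact cancel_half hL
  · simp only [if_neg hm, zero_smul] at hL ⊢
    rwa [zero_add] at hL

lemma L1_eq : L1 C H = R1 H := by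
  apply LinearMap.ext_on (span_top hq)
  rintro x (⟨m, n, rfl | rfl | rfl | rfl⟩ | ⟨m, rfl | rfl⟩) <;>
    simp only [R1, LinearMap.smulRight_apply]
  · rw [L1_a C H hq, H.ha m (n+1) (by omega), zero_smul]
  · rw [L1_b C H hq, H.hb m (n+1) (by omega), zero_smul]
  · rw [L1_c C H hq, H.hc m (n+1) (by omega), zero_smul]
  · rw [L1_d C H hq, H.hd m (n+1) (by omega), zero_smul]
  · rw [L1_z C H hq, H.hz m]
  · rw [L1_oz C H hq, H.hoz m]

lemma L2_eq : L2 C H = R1 H := by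
  apply LinearMap.ext_on (span_top hq)
  rintro x (⟨m, n, rfl | rfl | rfl | rfl⟩ | ⟨m, rfl | rfl⟩) <;>
    simp only [R1, LinearMap.smulRight_apply]
  · rw [L2_a C H hq, H.ha m (n+1) (by omega), zero_smul]
  · rw [L2_b C H hq, H.hb m (n+1) (by omega), zero_smul]
  · rw [L2_c C H hq, H.hc m (n+1) (by omega), zero_smul]
  · rw [L2_d C H hq, H.hd m (n+1) (by omega), zero_smul]
  · rw [L2_z C H hq, H.hz m]
  · rw [L2_oz C H hq, H.hoz m]

end eval
end Haar

/-- The linear functional `h` on `A(DT²_q)` with `h(z) = h(1−z) = 1/2`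
and `h = 0` on all other basis elements satisfies `h(1) = 1` and is two-sided invariant:
`(id⊗h)(Δp) = h(p)·1` and `(h⊗id)(Δp) = h(p)·1` (the Haar functional). -/
theorem statement_17 (q : ℂ) (hq : ‖q‖ = 1) (C : ADTCoalg q) (H : HaarData q) :
    H.h 1 = 1
    ∧ (∀ p : ADT q,
        (TensorProduct.rid ℂ (ADT q))
            ((TensorProduct.map (LinearMap.id : ADT q →ₗ[ℂ] ADT q) H.h) (C.Δ p))
          = H.h p • 1)
    ∧ (∀ p : ADT q,
        (TensorProduct.lid ℂ (ADT q))
            ((TensorProduct.map H.h (LinearMap.id : ADT q →ₗ[ℂ] ADT q)) (C.Δ p))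
          = H.h p • 1) := by
  have hq0 : q ≠ 0 := by
    intro h; rw [h] at hq; simp at hq
  refine ⟨?_, ?_, ?_⟩
  · have e : (1 : ADT q) = ADT.Dz q 0 * ADT.z q + ADT.Dz q 0 * (1 - ADT.z q) := by
      rw [Haar.Dz_zero, one_mul, one_mul]
      exact Haar.z_add_oz.symm
    rw [e, map_add, H.hz 0, H.hoz 0]
    norm_num
  · intro p
    have h := LinearMap.congr_fun (Haar.L1_eq C H hq0) p
    simpa only [Haar.L1, Haar.R1, LinearMap.comp_apply, AlgHom.toLinearMap_apply,
      LinearEquiv.coe_coe, LinearMap.smulRight_apply] using h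
  · intro p
    have h := LinearMap.congr_fun (Haar.L2_eq C H hq0) p
    simpa only [Haar.L2, Haar.R1, LinearMap.comp_apply, AlgHom.toLinearMap_apply,
      LinearEquiv.coe_coe, LinearMap.smulRight_apply] using h

end QDT
end
end

section
/- There is an isomorphism of unital *-algebras Ψ : A(DT²_q) → A(T²) × A(T²_{q²}) (direct product of *-algebras) determined by Ψ(a) = (u, 0), Ψ(d) = (v, 0), Ψ(b) = (0, x), Ψ(c) = (0, y), Ψ(D) = (uv, −q⁻¹xy); in particular Ψ(z) = (1, 0), so the quantum double-torus decomposes as the disjoint union of the classical torus T² and the quantum torus T²_{q²}. -/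
open scoped TensorProduct
noncomputable section
namespace QDT

/-! ### Auxiliary development for Statement 19 -/
section S19Aux

private lemma urel {q : ℂ} {x y : FreeAlgebra ℂ Gen} (h : URel q x y) :
    ADT.mk q (RingQuot.mkAlgHom ℂ (URel q) x) = ADT.mk q (RingQuot.mkAlgHom ℂ (URel q) y) :=
  congrArg _ (RingQuot.mkAlgHom_rel ℂ h)

private lemma drel {q : ℂ} {x y : Uq q} (h : DRel q x y) : ADT.mk q x = ADT.mk q y :=
  RingQuot.mkAlgHom_rel ℂ h

private lemma addX_cancel {R : Type} [AddCommMonoid R] {A B X : R}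
    (h1 : A + X = 0) (h2 : B + X = 0) : A = B := by
  have : A + (X + B) = (A + X) + B := (add_assoc A X B).symm
  rw [add_comm X B, h2, add_zero, h1, zero_add] at this
  exact this

private lemma cancel_left {R : Type} [AddGroup R] {A B X : R} (h : X + A = X + B) : A = B :=
  add_left_cancel h

private lemma cancel_right {R : Type} [AddGroup R] {A B X : R} (h : A + X = B + X) : A = B :=
  add_right_cancel h

namespace ADT
variable {q : ℂ}

lemma rel_ab : a q * b q = q⁻¹ • (b q * a q) := by
  have h := urel (URel.ab (q := q)); simp only [map_mul, map_smul] at h; exact h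
lemma rel_cd : c q * d q = q⁻¹ • (d q * c q) := by
  have h := urel (URel.cd (q := q)); simp only [map_mul, map_smul] at h; exact h
lemma rel_ac : a q * c q = q • (c q * a q) := by
  have h := urel (URel.ac (q := q)); simp only [map_mul, map_smul] at h; exact h
lemma rel_bd : b q * d q = q • (d q * b q) := by
  have h := urel (URel.bd (q := q)); simp only [map_mul, map_smul] at h; exact h
lemma rel_ad : a q * d q = d q * a q := by
  have h := urel (URel.ad (q := q)); simp only [map_mul] at h; exact h
lemma rel_bc : b q * c q = (q ^ 2) • (c q * b q) := by
  have h := urel (URel.bc (q := q)); simp only [map_mul, map_smul] at h; exact h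
lemma rel_DDi : D q * Di q = 1 := by
  have h := urel (URel.DDi (q := q)); simp only [map_mul, map_one] at h; exact h
lemma rel_DiD : Di q * D q = 1 := by
  have h := urel (URel.DiD (q := q)); simp only [map_mul, map_one] at h; exact h
lemma rel_det : a q * d q - q⁻¹ • (b q * c q) = D q := by
  have h := urel (URel.det (q := q)); simp only [map_mul, map_smul, map_sub] at h; exact h

/-- A subtraction-free form of the determinant relation. -/
lemma det' : a q * d q = D q + q⁻¹ • (b q * c q) :=
  by rw [← rel_det]; exact (sub_add_cancel (a q * d q) (q⁻¹ • (b q * c q))).symm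

lemma ab0 : a q * b q = 0 := by
  have h := drel (DRel.ab (q := q)); simp only [map_mul, map_zero] at h; exact h
lemma ac0 : a q * c q = 0 := by
  have h := drel (DRel.ac (q := q)); simp only [map_mul, map_zero] at h; exact h
lemma cd0 : c q * d q = 0 := by
  have h := drel (DRel.cd (q := q)); simp only [map_mul, map_zero] at h; exact h
lemma bd0 : b q * d q = 0 := by
  have h := drel (DRel.bd (q := q)); simp only [map_mul, map_zero] at h; exact h

variable (hq : q ≠ 0)
include hq

lemma ba0 : b q * a q = 0 := by
  have h := rel_ab (q := q); rw [ab0] at h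
  simpa [smul_eq_zero, inv_eq_zero, hq] using h.symm
lemma ca0 : c q * a q = 0 := by
  have h := rel_ac (q := q); rw [ac0] at h
  simpa [smul_eq_zero, hq] using h.symm
lemma dc0 : d q * c q = 0 := by
  have h := rel_cd (q := q); rw [cd0] at h
  simpa [smul_eq_zero, inv_eq_zero, hq] using h.symm
lemma db0 : d q * b q = 0 := by
  have h := rel_bd (q := q); rw [bd0] at h
  simpa [smul_eq_zero, hq] using h.symm

lemma cb_rel : c q * b q = (q ^ 2)⁻¹ • (b q * c q) := by
  rw [rel_bc, smul_smul, inv_mul_cancel₀ (pow_ne_zero 2 hq), one_smul]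

/-- `D` commutes with `a`. -/
lemma Da_comm : D q * a q = a q * D q := by
  have h1 : (D q + q⁻¹ • (b q * c q)) * a q = a q * (a q * d q) := by
    rw [← det', mul_assoc, ← rel_ad, ← mul_assoc]
  have h2 : a q * (a q * d q) = a q * D q + 0 := by
    rw [det', mul_add, mul_smul_comm, ← mul_assoc, ab0, zero_mul, smul_zero]
  rw [add_mul, smul_mul_assoc, mul_assoc, ca0 hq, mul_zero, smul_zero, h2, add_zero] at h1
  rwa [add_zero] at h1

/-- `D` commutes with `d`. -/
lemma Dd_comm : D q * d q = d q * D q := by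
  have h1 : (D q + q⁻¹ • (b q * c q)) * d q = d q * (a q * d q) := by
    rw [← det']
    simp only [← mul_assoc, ← rel_ad]
  have h2 : d q * (a q * d q) = d q * D q + 0 := by
    rw [det', mul_add, mul_smul_comm, ← mul_assoc, db0 hq, zero_mul, smul_zero]
  rw [add_mul, smul_mul_assoc, mul_assoc, cd0, mul_zero, smul_zero, h2, add_zero] at h1
  rwa [add_zero] at h1

lemma Dia_comm : Di q * a q = a q * Di q := by
  have h : Di q * (D q * a q) * Di q = Di q * (a q * D q) * Di q := by rw [Da_comm hq]
  have e1 : Di q * (D q * a q) * Di q = a q * Di q := by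
    rw [← mul_assoc, rel_DiD, one_mul]
  have e2 : Di q * (a q * D q) * Di q = Di q * a q := by
    rw [mul_assoc, mul_assoc, rel_DDi, mul_one]
  exact (e1.symm.trans (h.trans e2)).symm

lemma Did_comm : Di q * d q = d q * Di q := by
  have h : Di q * (D q * d q) * Di q = Di q * (d q * D q) * Di q := by rw [Dd_comm hq]
  have e1 : Di q * (D q * d q) * Di q = d q * Di q := by
    rw [← mul_assoc, rel_DiD, one_mul]
  have e2 : Di q * (d q * D q) * Di q = Di q * d q := by
    rw [mul_assoc, mul_assoc, rel_DDi, mul_one]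
  exact (e1.symm.trans (h.trans e2)).symm

lemma Db_comm : D q * b q = (q ^ 2)⁻¹ • (b q * D q) := by
  have h1 : D q * b q + (q⁻¹ * (q ^ 2)⁻¹) • (b q * (b q * c q)) = 0 := by
    have h0 : (D q + q⁻¹ • (b q * c q)) * b q = 0 := by
      rw [← det', mul_assoc, db0 hq, mul_zero]
    rw [add_mul, smul_mul_assoc, mul_assoc, cb_rel hq, mul_smul_comm, smul_smul] at h0
    exact h0
  have h2 : (q ^ 2)⁻¹ • (b q * D q) + (q⁻¹ * (q ^ 2)⁻¹) • (b q * (b q * c q)) = 0 := by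
    have h0 : b q * (D q + q⁻¹ • (b q * c q)) = 0 := by
      rw [← det', ← mul_assoc, ba0 hq, zero_mul]
    have h3 := congrArg (fun t => (q ^ 2)⁻¹ • t) h0
    simp only [smul_zero, mul_add, smul_add, mul_smul_comm, smul_smul] at h3
    rw [mul_comm (q⁻¹) ((q ^ 2)⁻¹)]
    exact h3
  exact addX_cancel h1 h2

lemma Dc_comm : D q * c q = (q ^ 2) • (c q * D q) := by
  have h1 : D q * c q + q⁻¹ • ((b q * c q) * c q) = 0 := by
    have h0 : (D q + q⁻¹ • (b q * c q)) * c q = 0 := by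
      rw [← det', mul_assoc, dc0 hq, mul_zero]
    rw [add_mul, smul_mul_assoc] at h0
    exact h0
  have h2 : (q ^ 2) • (c q * D q) + q⁻¹ • ((b q * c q) * c q) = 0 := by
    have h0 : c q * (D q + q⁻¹ • (b q * c q)) = 0 := by
      rw [← det', ← mul_assoc, ca0 hq, zero_mul]
    have h3 := congrArg (fun t => (q ^ 2) • t) h0
    simp only [smul_zero, mul_add, smul_add, mul_smul_comm, smul_smul] at h3
    rw [← mul_assoc (c q) (b q) (c q), cb_rel hq, smul_mul_assoc, smul_smul] at h3
    have hs : q ^ 2 * q⁻¹ * (q ^ 2)⁻¹ = q⁻¹ := by field_simp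
    rw [hs] at h3
    exact h3
  exact addX_cancel h1 h2

lemma Dib_comm : Di q * b q = (q ^ 2) • (b q * Di q) := by
  have h : Di q * (D q * b q) * Di q = Di q * ((q ^ 2)⁻¹ • (b q * D q)) * Di q := by
    rw [Db_comm hq]
  have e1 : Di q * (D q * b q) * Di q = b q * Di q := by
    rw [← mul_assoc, rel_DiD, one_mul]
  have e2 : Di q * ((q ^ 2)⁻¹ • (b q * D q)) * Di q = (q ^ 2)⁻¹ • (Di q * b q) := by
    rw [mul_smul_comm, smul_mul_assoc, mul_assoc, mul_assoc, rel_DDi, mul_one]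
  have h2 : b q * Di q = (q ^ 2)⁻¹ • (Di q * b q) := e1.symm.trans (h.trans e2)
  rw [h2, smul_smul, mul_inv_cancel₀ (pow_ne_zero 2 hq), one_smul]

lemma Dic_comm : Di q * c q = (q ^ 2)⁻¹ • (c q * Di q) := by
  have h : Di q * (D q * c q) * Di q = Di q * ((q ^ 2) • (c q * D q)) * Di q := by
    rw [Dc_comm hq]
  have e1 : Di q * (D q * c q) * Di q = c q * Di q := by
    rw [← mul_assoc, rel_DiD, one_mul]
  have e2 : Di q * ((q ^ 2) • (c q * D q)) * Di q = (q ^ 2) • (Di q * c q) := by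
    rw [mul_smul_comm, smul_mul_assoc, mul_assoc, mul_assoc, rel_DDi, mul_one]
  have h2 : c q * Di q = (q ^ 2) • (Di q * c q) := e1.symm.trans (h.trans e2)
  rw [h2, smul_smul, inv_mul_cancel₀ (pow_ne_zero 2 hq), one_smul]

lemma bDi_comm : b q * Di q = (q ^ 2)⁻¹ • (Di q * b q) := by
  rw [Dib_comm hq, smul_smul, inv_mul_cancel₀ (pow_ne_zero 2 hq), one_smul]

lemma cDi_comm : c q * Di q = (q ^ 2) • (Di q * c q) := by
  rw [Dic_comm hq, smul_smul, mul_inv_cancel₀ (pow_ne_zero 2 hq), one_smul]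


omit hq

/-- The complementary idempotent `w = 1 - z`, written without subtraction. -/
def w (q : ℂ) : ADT q := (-q⁻¹) • (Di q * (b q * c q))

include hq in
lemma dummy_unused : q ≠ 0 := hq

omit hq in
lemma zw1 : z q + w q = 1 := by
  have h := congrArg (fun t => Di q * t) (det' (q := q))
  simp only [mul_add, mul_smul_comm, rel_DiD] at h
  show Di q * (a q * d q) + (-q⁻¹) • (Di q * (b q * c q)) = 1
  rw [h, add_assoc, ← add_smul, show q⁻¹ + -q⁻¹ = (0:ℂ) by ring, zero_smul, add_zero]

include hq

lemma zb0 : z q * b q = 0 := by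
  show (Di q * (a q * d q)) * b q = 0
  rw [mul_assoc, mul_assoc, db0 hq, mul_zero, mul_zero]

lemma zc0 : z q * c q = 0 := by
  show (Di q * (a q * d q)) * c q = 0
  rw [mul_assoc, mul_assoc, dc0 hq, mul_zero, mul_zero]

lemma wa0 : w q * a q = 0 := by
  show ((-q⁻¹) • (Di q * (b q * c q))) * a q = 0
  rw [smul_mul_assoc, mul_assoc, mul_assoc, ca0 hq, mul_zero, mul_zero, smul_zero]

omit hq in
lemma wd0 : w q * d q = 0 := by
  show ((-q⁻¹) • (Di q * (b q * c q))) * d q = 0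
  rw [smul_mul_assoc, mul_assoc, mul_assoc, cd0, mul_zero, mul_zero, smul_zero]

lemma za : z q * a q = a q := by
  have h := congrArg (fun t => t * a q) (zw1 (q := q))
  simp only [add_mul, one_mul] at h
  rw [wa0 hq, add_zero] at h
  exact h

lemma zd : z q * d q = d q := by
  have h := congrArg (fun t => t * d q) (zw1 (q := q))
  simp only [add_mul, one_mul] at h
  rw [wd0, add_zero] at h
  exact h

lemma wb : w q * b q = b q := by
  have h := congrArg (fun t => t * b q) (zw1 (q := q))
  simp only [add_mul, one_mul] at h
  rw [zb0 hq, zero_add] at h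
  exact h

lemma wc : w q * c q = c q := by
  have h := congrArg (fun t => t * c q) (zw1 (q := q))
  simp only [add_mul, one_mul] at h
  rw [zc0 hq, zero_add] at h
  exact h

lemma bz0 : b q * z q = 0 := by
  show b q * (Di q * (a q * d q)) = 0
  rw [← mul_assoc, bDi_comm hq, smul_mul_assoc, mul_assoc, ← mul_assoc (b q) (a q) (d q),
    ba0 hq, zero_mul, mul_zero, smul_zero]

lemma cz0 : c q * z q = 0 := by
  show c q * (Di q * (a q * d q)) = 0
  rw [← mul_assoc, cDi_comm hq, smul_mul_assoc, mul_assoc, ← mul_assoc (c q) (a q) (d q),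
    ca0 hq, zero_mul, mul_zero, smul_zero]

lemma z_comm_a : z q * a q = a q * z q := by
  have e1 : z q * a q = Di q * (a q * (a q * d q)) := by
    show (Di q * (a q * d q)) * a q = _
    rw [mul_assoc, mul_assoc, ← rel_ad]
  have e2 : a q * z q = Di q * (a q * (a q * d q)) := by
    show a q * (Di q * (a q * d q)) = _
    rw [← mul_assoc, ← Dia_comm hq, mul_assoc]
  rw [e1, e2]

lemma z_comm_d : z q * d q = d q * z q := by
  have e1 : z q * d q = Di q * (a q * (d q * d q)) := by
    show (Di q * (a q * d q)) * d q = _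
    rw [mul_assoc, mul_assoc]
  have e2 : d q * z q = Di q * (a q * (d q * d q)) := by
    show d q * (Di q * (a q * d q)) = _
    rw [← mul_assoc, ← Did_comm hq, mul_assoc, ← mul_assoc (d q) (a q) (d q), ← rel_ad,
      mul_assoc]
  rw [e1, e2]

lemma z_comm_D : z q * D q = D q * z q := by
  have e1 : z q * D q = a q * d q := by
    show (Di q * (a q * d q)) * D q = _
    rw [mul_assoc, mul_assoc, ← Dd_comm hq, ← mul_assoc (a q) (D q) (d q), ← Da_comm hq,
      mul_assoc, ← mul_assoc, rel_DiD, one_mul]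
  have e2 : D q * z q = a q * d q := by
    show D q * (Di q * (a q * d q)) = _
    rw [← mul_assoc, rel_DDi, one_mul]
  rw [e1, e2]

lemma z_comm_Di : z q * Di q = Di q * z q := by
  show (Di q * (a q * d q)) * Di q = Di q * (Di q * (a q * d q))
  rw [mul_assoc, mul_assoc, ← Did_comm hq, ← mul_assoc (a q) (Di q) (d q), ← Dia_comm hq,
    mul_assoc]

omit hq

/-- Induction principle for `ADT q` via generators. -/
lemma adt_induction {P : ADT q → Prop}
    (halg : ∀ r : ℂ, P (algebraMap ℂ (ADT q) r))
    (ha : P (a q)) (hb : P (b q)) (hc : P (c q)) (hd : P (d q))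
    (hD : P (D q)) (hDi : P (Di q))
    (hmul : ∀ x y, P x → P y → P (x * y))
    (hadd : ∀ x y, P x → P y → P (x + y)) :
    ∀ x : ADT q, P x := by
  intro x
  obtain ⟨y, rfl⟩ := RingQuot.mkAlgHom_surjective ℂ (DRel q) x
  obtain ⟨f, rfl⟩ := RingQuot.mkAlgHom_surjective ℂ (URel q) y
  induction f using FreeAlgebra.induction with
  | grade0 r => rw [AlgHom.commutes, AlgHom.commutes]; exact halg r
  | grade1 g =>
                  cases g
                  · exact ha
                  · exact hb
                  · exact hc
                  · exact hd
                  · exact hD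
                  · exact hDi
  | mul x y ihx ihy => rw [map_mul, map_mul]; exact hmul _ _ ihx ihy
  | add x y ihx ihy => rw [map_add, map_add]; exact hadd _ _ ihx ihy

include hq

lemma z_central (p : ADT q) : z q * p = p * z q := by
  induction p using adt_induction with
  | halg r => exact (Algebra.commutes r (z q)).symm
  | ha => exact z_comm_a hq
  | hb => rw [zb0 hq, bz0 hq]
  | hc => rw [zc0 hq, cz0 hq]
  | hd => exact z_comm_d hq
  | hD => exact z_comm_D hq
  | hDi => exact z_comm_Di hq
  | hmul x y ihx ihy => rw [← mul_assoc, ihx, mul_assoc, ihy, ← mul_assoc]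
  | hadd x y ihx ihy => rw [mul_add, add_mul, ihx, ihy]

lemma w_central (p : ADT q) : w q * p = p * w q := by
  have h1 : z q * p + w q * p = p := by rw [← add_mul, zw1, one_mul]
  have h2 : p * z q + p * w q = p := by rw [← mul_add, zw1, mul_one]
  have h3 : z q * p + w q * p = z q * p + p * w q := by
    rw [h1, z_central hq p, h2]
  exact cancel_left h3

lemma zw0 : z q * w q = 0 := by
  show z q * ((-q⁻¹) • (Di q * (b q * c q))) = 0
  rw [mul_smul_comm, ← mul_assoc, z_comm_Di hq, mul_assoc, ← mul_assoc (z q) (b q) (c q),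
    zb0 hq, zero_mul, mul_zero, smul_zero]

lemma wz0 : w q * z q = 0 := by rw [← z_central hq, zw0 hq]

lemma zz : z q * z q = z q := by
  have h := congrArg (fun t => z q * t) (zw1 (q := q))
  simp only [mul_add, mul_one] at h
  rw [zw0 hq, add_zero] at h
  exact h

lemma ww : w q * w q = w q := by
  have h := congrArg (fun t => t * w q) (zw1 (q := q))
  simp only [add_mul, one_mul] at h
  rw [zw0 hq, zero_add] at h
  exact h



end ADT

namespace AT
variable {r : ℂ}

lemma x_xi : x r * xi r = 1 := by
  have h := RingQuot.mkAlgHom_rel ℂ (TRel.xxi (r := r))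
  simp only [map_mul, map_one] at h; exact h
lemma xi_x : xi r * x r = 1 := by
  have h := RingQuot.mkAlgHom_rel ℂ (TRel.xix (r := r))
  simp only [map_mul, map_one] at h; exact h
lemma y_yi : y r * yi r = 1 := by
  have h := RingQuot.mkAlgHom_rel ℂ (TRel.yyi (r := r))
  simp only [map_mul, map_one] at h; exact h
lemma yi_y : yi r * y r = 1 := by
  have h := RingQuot.mkAlgHom_rel ℂ (TRel.yiy (r := r))
  simp only [map_mul, map_one] at h; exact h
lemma x_y : x r * y r = r • (y r * x r) := by
  have h := RingQuot.mkAlgHom_rel ℂ (TRel.xy (r := r))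
  simp only [map_mul, map_smul] at h; exact h

lemma xi_x_cancel (t : AT r) : xi r * (x r * t) = t := by rw [← mul_assoc, xi_x, one_mul]
lemma x_xi_cancel (t : AT r) : x r * (xi r * t) = t := by rw [← mul_assoc, x_xi, one_mul]
lemma yi_y_cancel (t : AT r) : yi r * (y r * t) = t := by rw [← mul_assoc, yi_y, one_mul]
lemma y_yi_cancel (t : AT r) : y r * (yi r * t) = t := by rw [← mul_assoc, y_yi, one_mul]

lemma xi_y (hr : r ≠ 0) : xi r * y r = r⁻¹ • (y r * xi r) := by
  have h1 : xi r * (x r * y r) * xi r = xi r * (r • (y r * x r)) * xi r := by rw [x_y]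
  have e1 : xi r * (x r * y r) * xi r = y r * xi r := by rw [xi_x_cancel]
  have e2 : xi r * (r • (y r * x r)) * xi r = r • (xi r * y r) := by
    rw [mul_smul_comm, smul_mul_assoc, mul_assoc, mul_assoc, x_xi, mul_one]
  have h2 : y r * xi r = r • (xi r * y r) := e1.symm.trans (h1.trans e2)
  have h3 := congrArg (fun t => r⁻¹ • t) h2
  simp only [smul_smul, inv_mul_cancel₀ hr, one_smul] at h3
  exact h3.symm

lemma yixiy (hr : r ≠ 0) : yi r * (xi r * y r) = r⁻¹ • xi r := by
  rw [xi_y hr, mul_smul_comm, yi_y_cancel]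

end AT

/-! ### The maps `π₁ : ADT q →ₐ AT 1` and `π₂ : ADT q →ₐ AT (q²)` -/

def F1 : Gen → AT 1
  | Gen.a => AT.x 1
  | Gen.b => 0
  | Gen.c => 0
  | Gen.d => AT.y 1
  | Gen.D => AT.x 1 * AT.y 1
  | Gen.Di => AT.yi 1 * AT.xi 1

def F2 (q : ℂ) : Gen → AT (q ^ 2)
  | Gen.a => 0
  | Gen.b => AT.x (q ^ 2)
  | Gen.c => AT.y (q ^ 2)
  | Gen.d => 0
  | Gen.D => (-q⁻¹) • (AT.x (q ^ 2) * AT.y (q ^ 2))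
  | Gen.Di => (-q) • (AT.yi (q ^ 2) * AT.xi (q ^ 2))

def π1free (q : ℂ) : FreeAlgebra ℂ Gen →ₐ[ℂ] AT 1 := FreeAlgebra.lift ℂ F1
def π2free (q : ℂ) : FreeAlgebra ℂ Gen →ₐ[ℂ] AT (q ^ 2) := FreeAlgebra.lift ℂ (F2 q)

lemma π1free_resp {q : ℂ} : ∀ ⦃u v⦄, URel q u v → π1free q u = π1free q v := by
  intro u v h
  cases h with
  | ab => simp [π1free, F1]
  | cd => simp [π1free, F1]
  | ac => simp [π1free, F1]
  | bd => simp [π1free, F1]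
  | ad =>
      simp only [map_mul, π1free, FreeAlgebra.lift_ι_apply, F1]
      rw [AT.x_y, one_smul]
  | bc => simp [π1free, F1]
  | DDi =>
      simp only [map_mul, map_one, π1free, FreeAlgebra.lift_ι_apply, F1]
      rw [mul_assoc, AT.y_yi_cancel, AT.x_xi]
  | DiD =>
      simp only [map_mul, map_one, π1free, FreeAlgebra.lift_ι_apply, F1]
      rw [mul_assoc, AT.xi_x_cancel, AT.yi_y]
  | det =>
      simp only [map_mul, map_smul, map_sub, π1free, FreeAlgebra.lift_ι_apply, F1]
      rw [mul_zero, smul_zero]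
      exact sub_zero _

lemma π2free_resp {q : ℂ} (hq : q ≠ 0) : ∀ ⦃u v⦄, URel q u v → π2free q u = π2free q v := by
  intro u v h
  cases h with
  | ab => simp [π2free, F2]
  | cd => simp [π2free, F2]
  | ac => simp [π2free, F2]
  | bd => simp [π2free, F2]
  | ad => simp [π2free, F2]
  | bc =>
      simp only [map_mul, map_smul, π2free, FreeAlgebra.lift_ι_apply, F2]
      exact AT.x_y
  | DDi =>
      simp only [map_mul, map_one, π2free, FreeAlgebra.lift_ι_apply, F2]
      rw [smul_mul_smul_comm, show -q⁻¹ * -q = (1:ℂ) by field_simp, one_smul,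
        mul_assoc, AT.y_yi_cancel, AT.x_xi]
  | DiD =>
      simp only [map_mul, map_one, π2free, FreeAlgebra.lift_ι_apply, F2]
      rw [smul_mul_smul_comm, show -q * -q⁻¹ = (1:ℂ) by field_simp, one_smul,
        mul_assoc, AT.xi_x_cancel, AT.yi_y]
  | det =>
      simp only [map_mul, map_smul, map_sub, π2free, FreeAlgebra.lift_ι_apply, F2]
      rw [zero_mul, zero_sub]
      exact (neg_smul q⁻¹ _).symm

def π1uq (q : ℂ) : Uq q →ₐ[ℂ] AT 1 :=
  RingQuot.liftAlgHom ℂ ⟨π1free q, π1free_resp⟩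
def π2uq (q : ℂ) (hq : q ≠ 0) : Uq q →ₐ[ℂ] AT (q ^ 2) :=
  RingQuot.liftAlgHom ℂ ⟨π2free q, π2free_resp hq⟩

lemma π1uq_resp {q : ℂ} : ∀ ⦃u v⦄, DRel q u v → π1uq q u = π1uq q v := by
  intro u v h
  cases h <;>
    simp only [map_mul, map_zero, π1uq, Uq.a, Uq.b, Uq.c, Uq.d,
      RingQuot.liftAlgHom_mkAlgHom_apply, π1free, FreeAlgebra.lift_ι_apply, F1] <;>
    simp only [mul_zero, zero_mul]

lemma π2uq_resp {q : ℂ} (hq : q ≠ 0) : ∀ ⦃u v⦄, DRel q u v → π2uq q hq u = π2uq q hq v := by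
  intro u v h
  cases h <;>
    simp only [map_mul, map_zero, π2uq, Uq.a, Uq.b, Uq.c, Uq.d,
      RingQuot.liftAlgHom_mkAlgHom_apply, π2free, FreeAlgebra.lift_ι_apply, F2] <;>
    simp only [mul_zero, zero_mul]

def π1 (q : ℂ) : ADT q →ₐ[ℂ] AT 1 :=
  RingQuot.liftAlgHom ℂ ⟨π1uq q, π1uq_resp⟩
def π2 (q : ℂ) (hq : q ≠ 0) : ADT q →ₐ[ℂ] AT (q ^ 2) :=
  RingQuot.liftAlgHom ℂ ⟨π2uq q hq, π2uq_resp hq⟩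

section PiEval
variable {q : ℂ} (hq : q ≠ 0)

lemma π1_gen (g : Gen) :
    π1 q (ADT.mk q (RingQuot.mkAlgHom ℂ (URel q) (FreeAlgebra.ι ℂ g))) = F1 g := by
  simp only [π1, ADT.mk, RingQuot.liftAlgHom_mkAlgHom_apply, π1uq, π1free,
    FreeAlgebra.lift_ι_apply]

lemma π2_gen (g : Gen) :
    π2 q hq (ADT.mk q (RingQuot.mkAlgHom ℂ (URel q) (FreeAlgebra.ι ℂ g))) = F2 q g := by
  simp only [π2, ADT.mk, RingQuot.liftAlgHom_mkAlgHom_apply, π2uq, π2free,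
    FreeAlgebra.lift_ι_apply]

lemma π1_a : π1 q (ADT.a q) = AT.x 1 := π1_gen Gen.a
lemma π1_b : π1 q (ADT.b q) = 0 := π1_gen Gen.b
lemma π1_c : π1 q (ADT.c q) = 0 := π1_gen Gen.c
lemma π1_d : π1 q (ADT.d q) = AT.y 1 := π1_gen Gen.d
lemma π1_D : π1 q (ADT.D q) = AT.x 1 * AT.y 1 := π1_gen Gen.D
lemma π1_Di : π1 q (ADT.Di q) = AT.yi 1 * AT.xi 1 := π1_gen Gen.Di

lemma π2_a : π2 q hq (ADT.a q) = 0 := π2_gen hq Gen.a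
lemma π2_b : π2 q hq (ADT.b q) = AT.x (q ^ 2) := π2_gen hq Gen.b
lemma π2_c : π2 q hq (ADT.c q) = AT.y (q ^ 2) := π2_gen hq Gen.c
lemma π2_d : π2 q hq (ADT.d q) = 0 := π2_gen hq Gen.d
lemma π2_D : π2 q hq (ADT.D q) = (-q⁻¹) • (AT.x (q ^ 2) * AT.y (q ^ 2)) := π2_gen hq Gen.D
lemma π2_Di : π2 q hq (ADT.Di q) = (-q) • (AT.yi (q ^ 2) * AT.xi (q ^ 2)) := π2_gen hq Gen.Di

end PiEval


/-! ### The section maps `g₁ : AT 1 → ADT q`, `g₂ : AT (q²) → ADT q` -/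

def G1 (q : ℂ) : TGen → ADT q
  | TGen.x => ADT.a q
  | TGen.xi => ADT.Di q * ADT.d q
  | TGen.y => ADT.d q
  | TGen.yi => ADT.Di q * ADT.a q

def G2 (q : ℂ) : TGen → ADT q
  | TGen.x => ADT.b q
  | TGen.xi => (-q) • (ADT.Di q * ADT.c q)
  | TGen.y => ADT.c q
  | TGen.yi => (-q⁻¹) • (ADT.Di q * ADT.b q)

def L1 (q : ℂ) : FreeAlgebra ℂ TGen →ₐ[ℂ] ADT q := FreeAlgebra.lift ℂ (G1 q)
def L2 (q : ℂ) : FreeAlgebra ℂ TGen →ₐ[ℂ] ADT q := FreeAlgebra.lift ℂ (G2 q)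

section Gmaps
variable {q : ℂ} (hq : q ≠ 0)
include hq
open ADT

/- products of `G1`-values -/
lemma g1_xxi : a q * (Di q * d q) = z q := by
  rw [← mul_assoc, ← Dia_comm hq, mul_assoc]; rfl
lemma g1_xix : (Di q * d q) * a q = z q := by
  rw [mul_assoc, ← rel_ad]; rfl
lemma g1_yyi : d q * (Di q * a q) = z q := by
  rw [← mul_assoc, ← Did_comm hq, mul_assoc, ← rel_ad]; rfl
lemma g1_yiy : (Di q * a q) * d q = z q := by
  rw [mul_assoc]; rfl

/- products of `G2`-values -/
lemma g2_xxi : b q * ((-q) • (Di q * c q)) = w q := by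
  rw [mul_smul_comm, ← mul_assoc, bDi_comm hq, smul_mul_assoc, smul_smul, mul_assoc]
  show (-q * (q ^ 2)⁻¹) • (Di q * (b q * c q)) = w q
  rw [show -q * (q ^ 2)⁻¹ = -q⁻¹ by rw [show (q:ℂ)^2 = q*q by ring, mul_inv]; field_simp]; rfl
lemma g2_xix : ((-q) • (Di q * c q)) * b q = w q := by
  rw [smul_mul_assoc, mul_assoc, cb_rel hq, mul_smul_comm, smul_smul]
  rw [show -q * (q ^ 2)⁻¹ = -q⁻¹ by rw [show (q:ℂ)^2 = q*q by ring, mul_inv]; field_simp]; rfl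
lemma g2_yyi : c q * ((-q⁻¹) • (Di q * b q)) = w q := by
  rw [mul_smul_comm, ← mul_assoc, cDi_comm hq, smul_mul_assoc, smul_smul, mul_assoc,
    cb_rel hq, mul_smul_comm, smul_smul]
  rw [show -q⁻¹ * q ^ 2 * (q ^ 2)⁻¹ = -q⁻¹ by rw [mul_assoc, mul_inv_cancel₀ (pow_ne_zero 2 hq), mul_one]]; rfl
lemma g2_yiy : ((-q⁻¹) • (Di q * b q)) * c q = w q := by
  rw [smul_mul_assoc, mul_assoc]; rfl

lemma L1_resp : ∀ ⦃u v⦄, RingQuot.Rel (TRel 1) u v → z q * L1 q u = z q * L1 q v := by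
  intro u v h
  induction h with
  | of h0 =>
      cases h0 with
      | xxi =>
          simp only [map_mul, map_one, L1, FreeAlgebra.lift_ι_apply, G1]
          rw [g1_xxi hq, zz hq, mul_one]
      | xix =>
          simp only [map_mul, map_one, L1, FreeAlgebra.lift_ι_apply, G1]
          rw [g1_xix hq, zz hq, mul_one]
      | yyi =>
          simp only [map_mul, map_one, L1, FreeAlgebra.lift_ι_apply, G1]
          rw [g1_yyi hq, zz hq, mul_one]
      | yiy =>
          simp only [map_mul, map_one, L1, FreeAlgebra.lift_ι_apply, G1]
          rw [g1_yiy hq, zz hq, mul_one]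
      | xy =>
          simp only [map_mul, map_smul, L1, FreeAlgebra.lift_ι_apply, G1]
          rw [one_smul, rel_ad]
  | add_left h0 ih => simp only [map_add, mul_add]; rw [ih]
  | mul_left h0 ih =>
      simp only [map_mul]; rw [← mul_assoc, ← mul_assoc, ih]
  | mul_right h0 ih =>
      simp only [map_mul]
      rw [← mul_assoc, z_central hq (L1 q _), mul_assoc, ih,
        ← mul_assoc, ← z_central hq (L1 q _), mul_assoc]

lemma L2_resp : ∀ ⦃u v⦄, RingQuot.Rel (TRel (q ^ 2)) u v → w q * L2 q u = w q * L2 q v := by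
  intro u v h
  induction h with
  | of h0 =>
      cases h0 with
      | xxi =>
          simp only [map_mul, map_one, L2, FreeAlgebra.lift_ι_apply, G2]
          rw [g2_xxi hq, ww hq, mul_one]
      | xix =>
          simp only [map_mul, map_one, L2, FreeAlgebra.lift_ι_apply, G2]
          rw [g2_xix hq, ww hq, mul_one]
      | yyi =>
          simp only [map_mul, map_one, L2, FreeAlgebra.lift_ι_apply, G2]
          rw [g2_yyi hq, ww hq, mul_one]
      | yiy =>
          simp only [map_mul, map_one, L2, FreeAlgebra.lift_ι_apply, G2]
          rw [g2_yiy hq, ww hq, mul_one]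
      | xy =>
          simp only [map_mul, map_smul, L2, FreeAlgebra.lift_ι_apply, G2]
          rw [cb_rel hq, mul_smul_comm, mul_smul_comm, smul_smul,
            mul_inv_cancel₀ (pow_ne_zero 2 hq), one_smul]
  | add_left h0 ih => simp only [map_add, mul_add]; rw [ih]
  | mul_left h0 ih =>
      simp only [map_mul]; rw [← mul_assoc, ← mul_assoc, ih]
  | mul_right h0 ih =>
      simp only [map_mul]
      rw [← mul_assoc, w_central hq (L2 q _), mul_assoc, ih,
        ← mul_assoc, ← w_central hq (L2 q _), mul_assoc]

omit hq

/-- `g₁(p) = z · L1(f)` for any representative `f` of `p`. -/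
def g1 (q : ℂ) (hq : q ≠ 0) : AT 1 → ADT q := fun p =>
  Quot.lift (fun f => ADT.z q * L1 q f) (fun _ _ h => L1_resp hq h) p.toQuot

def g2 (q : ℂ) (hq : q ≠ 0) : AT (q ^ 2) → ADT q := fun p =>
  Quot.lift (fun f => ADT.w q * L2 q f) (fun _ _ h => L2_resp hq h) p.toQuot

variable (hq : q ≠ 0)

lemma g1_mk (f : FreeAlgebra ℂ TGen) :
    g1 q hq (RingQuot.mkAlgHom ℂ (TRel 1) f) = ADT.z q * L1 q f := by
  simp_rw [RingQuot.mkAlgHom_def, RingQuot.mkRingHom_def]; rfl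

lemma g2_mk (f : FreeAlgebra ℂ TGen) :
    g2 q hq (RingQuot.mkAlgHom ℂ (TRel (q ^ 2)) f) = ADT.w q * L2 q f := by
  simp_rw [RingQuot.mkAlgHom_def, RingQuot.mkRingHom_def]; rfl

/-- `π₁ ∘ L1 = mkAlgHom`. -/
lemma piL1 (f : FreeAlgebra ℂ TGen) : π1 q (L1 q f) = RingQuot.mkAlgHom ℂ (TRel 1) f := by
  have h : (π1 q).comp (L1 q) = RingQuot.mkAlgHom ℂ (TRel 1) := by
    apply FreeAlgebra.hom_ext
    funext t
    cases t with
    | x =>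
        show π1 q (L1 q (FreeAlgebra.ι ℂ TGen.x)) = _
        simp only [L1, FreeAlgebra.lift_ι_apply, G1, π1_a]
        rfl
    | xi =>
        show π1 q (L1 q (FreeAlgebra.ι ℂ TGen.xi)) = _
        simp only [L1, FreeAlgebra.lift_ι_apply, G1, map_mul, π1_Di, π1_d]
        rw [mul_assoc, AT.xi_y one_ne_zero, inv_one, one_smul, AT.yi_y_cancel]
        rfl
    | y =>
        show π1 q (L1 q (FreeAlgebra.ι ℂ TGen.y)) = _
        simp only [L1, FreeAlgebra.lift_ι_apply, G1, π1_d]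
        rfl
    | yi =>
        show π1 q (L1 q (FreeAlgebra.ι ℂ TGen.yi)) = _
        simp only [L1, FreeAlgebra.lift_ι_apply, G1, map_mul, π1_Di, π1_a]
        rw [mul_assoc, AT.xi_x, mul_one]
        rfl
  exact AlgHom.congr_fun h f

/-- `π₂ ∘ L2 = mkAlgHom`. -/
lemma piL2 (f : FreeAlgebra ℂ TGen) :
    π2 q hq (L2 q f) = RingQuot.mkAlgHom ℂ (TRel (q ^ 2)) f := by
  have hq2 : q ^ 2 ≠ 0 := pow_ne_zero 2 hq
  have h : (π2 q hq).comp (L2 q) = RingQuot.mkAlgHom ℂ (TRel (q ^ 2)) := by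
    apply FreeAlgebra.hom_ext
    funext t
    cases t with
    | x =>
        show π2 q hq (L2 q (FreeAlgebra.ι ℂ TGen.x)) = _
        simp only [L2, FreeAlgebra.lift_ι_apply, G2, π2_b]
        rfl
    | xi =>
        show π2 q hq (L2 q (FreeAlgebra.ι ℂ TGen.xi)) = _
        simp only [L2, FreeAlgebra.lift_ι_apply, G2, map_mul, map_smul, π2_Di, π2_c]
        rw [smul_mul_assoc, smul_smul, mul_assoc, AT.yixiy hq2, smul_smul]
        rw [show -q * -q * (q ^ 2)⁻¹ = (1:ℂ) by rw [show -q * -q = q^2 by ring, mul_inv_cancel₀ (pow_ne_zero 2 hq)], one_smul]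
        rfl
    | y =>
        show π2 q hq (L2 q (FreeAlgebra.ι ℂ TGen.y)) = _
        simp only [L2, FreeAlgebra.lift_ι_apply, G2, π2_c]
        rfl
    | yi =>
        show π2 q hq (L2 q (FreeAlgebra.ι ℂ TGen.yi)) = _
        simp only [L2, FreeAlgebra.lift_ι_apply, G2, map_mul, map_smul, π2_Di, π2_b]
        rw [smul_mul_assoc, smul_smul, mul_assoc, AT.xi_x, mul_one]
        rw [show -q⁻¹ * -q = (1:ℂ) by field_simp, one_smul]
        rfl
  exact AlgHom.congr_fun h f

end Gmaps


/-! ### The isomorphism and its inverse -/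

def Ψ0 (q : ℂ) (hq : q ≠ 0) : ADT q →ₐ[ℂ] AT 1 × AT (q ^ 2) := (π1 q).prod (π2 q hq)

def Φ (q : ℂ) (hq : q ≠ 0) : AT 1 × AT (q ^ 2) → ADT q := fun p =>
  g1 q hq p.1 + g2 q hq p.2

section Main
variable {q : ℂ} (hq : q ≠ 0)
include hq
open ADT

lemma Ψ0_apply (p : ADT q) : Ψ0 q hq p = (π1 q p, π2 q hq p) := rfl

omit hq in
lemma π1_z : π1 q (ADT.z q) = 1 := by
  show π1 q (Di q * (a q * d q)) = 1
  rw [map_mul, map_mul, π1_Di, π1_a, π1_d, mul_assoc, AT.xi_x_cancel, AT.yi_y]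

lemma π2_z : π2 q hq (ADT.z q) = 0 := by
  show π2 q hq (Di q * (a q * d q)) = 0
  rw [map_mul, map_mul, π2_a hq, zero_mul, mul_zero]

omit hq in
lemma π1_w : π1 q (ADT.w q) = 0 := by
  show π1 q ((-q⁻¹) • (Di q * (b q * c q))) = 0
  rw [map_smul, map_mul, map_mul, π1_b, zero_mul, mul_zero, smul_zero]

lemma π2_w : π2 q hq (ADT.w q) = 1 := by
  show π2 q hq ((-q⁻¹) • (Di q * (b q * c q))) = 1
  rw [map_smul, map_mul, map_mul, π2_Di hq, π2_b hq, π2_c hq, smul_mul_assoc, smul_smul]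
  rw [show -q⁻¹ * -q = (1:ℂ) by field_simp, one_smul, mul_assoc, AT.xi_x_cancel, AT.yi_y]

lemma Ψ0_z : Ψ0 q hq (ADT.z q) = (1, 0) := by
  rw [Ψ0_apply, π1_z, π2_z hq]

lemma Ψ0_w : Ψ0 q hq (ADT.w q) = (0, 1) := by
  rw [Ψ0_apply, π1_w, π2_w hq]

/-- key multiplicativity identity for `Φ`. -/
lemma split_mul (u1 u2 v1 v2 : ADT q) :
    (z q * u1 + w q * u2) * (z q * v1 + w q * v2)
      = z q * (u1 * v1) + w q * (u2 * v2) := by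
  have hzz : (z q * u1) * (z q * v1) = z q * (u1 * v1) := by
    calc (z q * u1) * (z q * v1) = ((z q * u1) * z q) * v1 := (mul_assoc _ _ _).symm
      _ = (z q * (z q * u1)) * v1 := by rw [← z_central hq]
      _ = ((z q * z q) * u1) * v1 := by rw [← mul_assoc]
      _ = (z q * u1) * v1 := by rw [zz hq]
      _ = z q * (u1 * v1) := mul_assoc _ _ _
  have hww : (w q * u2) * (w q * v2) = w q * (u2 * v2) := by
    calc (w q * u2) * (w q * v2) = ((w q * u2) * w q) * v2 := (mul_assoc _ _ _).symm
      _ = (w q * (w q * u2)) * v2 := by rw [← w_central hq]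
      _ = ((w q * w q) * u2) * v2 := by rw [← mul_assoc]
      _ = (w q * u2) * v2 := by rw [ww hq]
      _ = w q * (u2 * v2) := mul_assoc _ _ _
  have hzw : (z q * u1) * (w q * v2) = 0 := by
    calc (z q * u1) * (w q * v2) = ((z q * u1) * w q) * v2 := (mul_assoc _ _ _).symm
      _ = (w q * (z q * u1)) * v2 := by rw [← w_central hq]
      _ = ((w q * z q) * u1) * v2 := by rw [← mul_assoc]
      _ = 0 := by rw [wz0 hq, zero_mul, zero_mul]
  have hwz : (w q * u2) * (z q * v1) = 0 := by
    calc (w q * u2) * (z q * v1) = ((w q * u2) * z q) * v1 := (mul_assoc _ _ _).symm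
      _ = (z q * (w q * u2)) * v1 := by rw [← z_central hq]
      _ = ((z q * w q) * u2) * v1 := by rw [← mul_assoc]
      _ = 0 := by rw [zw0 hq, zero_mul, zero_mul]
  rw [add_mul, mul_add, mul_add, hzz, hww, hzw, hwz, add_zero, zero_add]

lemma Φ_mul (p r : AT 1 × AT (q ^ 2)) :
    Φ q hq (p * r) = Φ q hq p * Φ q hq r := by
  obtain ⟨f1, e1⟩ := RingQuot.mkAlgHom_surjective ℂ (TRel 1) p.1
  obtain ⟨f2, e2⟩ := RingQuot.mkAlgHom_surjective ℂ (TRel (q ^ 2)) p.2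
  obtain ⟨f3, e3⟩ := RingQuot.mkAlgHom_surjective ℂ (TRel 1) r.1
  obtain ⟨f4, e4⟩ := RingQuot.mkAlgHom_surjective ℂ (TRel (q ^ 2)) r.2
  show g1 q hq (p.1 * r.1) + g2 q hq (p.2 * r.2)
      = (g1 q hq p.1 + g2 q hq p.2) * (g1 q hq r.1 + g2 q hq r.2)
  rw [← e1, ← e2, ← e3, ← e4, ← map_mul, ← map_mul, g1_mk hq, g1_mk hq, g1_mk hq,
    g2_mk hq, g2_mk hq, g2_mk hq, map_mul, map_mul]
  exact (split_mul hq _ _ _ _).symm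

lemma Φ_add (p r : AT 1 × AT (q ^ 2)) :
    Φ q hq (p + r) = Φ q hq p + Φ q hq r := by
  obtain ⟨f1, e1⟩ := RingQuot.mkAlgHom_surjective ℂ (TRel 1) p.1
  obtain ⟨f2, e2⟩ := RingQuot.mkAlgHom_surjective ℂ (TRel (q ^ 2)) p.2
  obtain ⟨f3, e3⟩ := RingQuot.mkAlgHom_surjective ℂ (TRel 1) r.1
  obtain ⟨f4, e4⟩ := RingQuot.mkAlgHom_surjective ℂ (TRel (q ^ 2)) r.2
  show g1 q hq (p.1 + r.1) + g2 q hq (p.2 + r.2)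
      = (g1 q hq p.1 + g2 q hq p.2) + (g1 q hq r.1 + g2 q hq r.2)
  rw [← e1, ← e2, ← e3, ← e4, ← map_add, ← map_add, g1_mk hq, g1_mk hq, g1_mk hq,
    g2_mk hq, g2_mk hq, g2_mk hq, map_add, map_add, mul_add, mul_add]
  rw [add_add_add_comm]

lemma leftInv : ∀ p : ADT q, Φ q hq (Ψ0 q hq p) = p := by
  apply adt_induction
  · -- scalars
    intro r
    rw [AlgHom.commutes]
    show g1 q hq (algebraMap ℂ (AT 1) r) + g2 q hq (algebraMap ℂ (AT (q ^ 2)) r) = _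
    rw [← AlgHom.commutes (RingQuot.mkAlgHom ℂ (TRel 1)) r,
      ← AlgHom.commutes (RingQuot.mkAlgHom ℂ (TRel (q ^ 2))) r, g1_mk hq, g2_mk hq,
      AlgHom.commutes, AlgHom.commutes, Algebra.algebraMap_eq_smul_one (A := ADT q),
      mul_smul_comm, mul_smul_comm, mul_one, mul_one, ← smul_add, zw1,
      ← Algebra.algebraMap_eq_smul_one]
  · -- a
    show Φ q hq (π1 q (a q), π2 q hq (a q)) = a q
    rw [π1_a, π2_a hq]
    show g1 q hq (AT.x 1) + g2 q hq 0 = a q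
    rw [← map_zero (RingQuot.mkAlgHom ℂ (TRel (q ^ 2))), g2_mk hq, map_zero, mul_zero]
    show g1 q hq (RingQuot.mkAlgHom ℂ (TRel 1) (FreeAlgebra.ι ℂ TGen.x)) + 0 = a q
    rw [g1_mk hq, add_zero]
    show z q * L1 q (FreeAlgebra.ι ℂ TGen.x) = a q
    rw [L1, FreeAlgebra.lift_ι_apply]
    exact za hq
  · -- b
    show Φ q hq (π1 q (b q), π2 q hq (b q)) = b q
    rw [π1_b, π2_b hq]
    show g1 q hq 0 + g2 q hq (AT.x (q ^ 2)) = b q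
    rw [← map_zero (RingQuot.mkAlgHom ℂ (TRel 1)), g1_mk hq, map_zero, mul_zero]
    show 0 + g2 q hq (RingQuot.mkAlgHom ℂ (TRel (q ^ 2)) (FreeAlgebra.ι ℂ TGen.x)) = b q
    rw [g2_mk hq, zero_add]
    show w q * L2 q (FreeAlgebra.ι ℂ TGen.x) = b q
    rw [L2, FreeAlgebra.lift_ι_apply]
    exact wb hq
  · -- c
    show Φ q hq (π1 q (c q), π2 q hq (c q)) = c q
    rw [π1_c, π2_c hq]
    show g1 q hq 0 + g2 q hq (AT.y (q ^ 2)) = c q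
    rw [← map_zero (RingQuot.mkAlgHom ℂ (TRel 1)), g1_mk hq, map_zero, mul_zero]
    show 0 + g2 q hq (RingQuot.mkAlgHom ℂ (TRel (q ^ 2)) (FreeAlgebra.ι ℂ TGen.y)) = c q
    rw [g2_mk hq, zero_add]
    show w q * L2 q (FreeAlgebra.ι ℂ TGen.y) = c q
    rw [L2, FreeAlgebra.lift_ι_apply]
    exact wc hq
  · -- d
    show Φ q hq (π1 q (d q), π2 q hq (d q)) = d q
    rw [π1_d, π2_d hq]
    show g1 q hq (AT.y 1) + g2 q hq 0 = d q
    rw [← map_zero (RingQuot.mkAlgHom ℂ (TRel (q ^ 2))), g2_mk hq, map_zero, mul_zero]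
    show g1 q hq (RingQuot.mkAlgHom ℂ (TRel 1) (FreeAlgebra.ι ℂ TGen.y)) + 0 = d q
    rw [g1_mk hq, add_zero]
    show z q * L1 q (FreeAlgebra.ι ℂ TGen.y) = d q
    rw [L1, FreeAlgebra.lift_ι_apply]
    exact zd hq
  · -- D
    show Φ q hq (π1 q (D q), π2 q hq (D q)) = D q
    rw [π1_D, π2_D hq]
    have ex : AT.x 1 * AT.y 1
        = RingQuot.mkAlgHom ℂ (TRel 1) (FreeAlgebra.ι ℂ TGen.x * FreeAlgebra.ι ℂ TGen.y) := by
      rw [map_mul]; rfl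
    have ex2 : (-q⁻¹) • (AT.x (q ^ 2) * AT.y (q ^ 2))
        = RingQuot.mkAlgHom ℂ (TRel (q ^ 2))
            ((-q⁻¹) • (FreeAlgebra.ι ℂ TGen.x * FreeAlgebra.ι ℂ TGen.y)) := by
      rw [map_smul, map_mul]; rfl
    show g1 q hq ((AT.x 1 * AT.y 1)) + g2 q hq ((-q⁻¹) • (AT.x (q ^ 2) * AT.y (q ^ 2))) = D q
    rw [ex, ex2, g1_mk hq, g2_mk hq, map_smul, map_mul, map_mul]
    show z q * (L1 q (FreeAlgebra.ι ℂ TGen.x) * L1 q (FreeAlgebra.ι ℂ TGen.y))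
        + w q * ((-q⁻¹) • (L2 q (FreeAlgebra.ι ℂ TGen.x) * L2 q (FreeAlgebra.ι ℂ TGen.y))) = D q
    rw [L1, L2, FreeAlgebra.lift_ι_apply, FreeAlgebra.lift_ι_apply,
      FreeAlgebra.lift_ι_apply, FreeAlgebra.lift_ι_apply]
    show z q * (a q * d q) + w q * ((-q⁻¹) • (b q * c q)) = D q
    rw [← mul_assoc, za hq, mul_smul_comm, ← mul_assoc, wb hq, det', add_assoc,
      ← add_smul, show q⁻¹ + -q⁻¹ = (0:ℂ) by ring, zero_smul, add_zero]
  · -- Di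
    show Φ q hq (π1 q (Di q), π2 q hq (Di q)) = Di q
    rw [π1_Di, π2_Di hq]
    have ex : AT.yi 1 * AT.xi 1
        = RingQuot.mkAlgHom ℂ (TRel 1) (FreeAlgebra.ι ℂ TGen.yi * FreeAlgebra.ι ℂ TGen.xi) := by
      rw [map_mul]; rfl
    have ex2 : (-q) • (AT.yi (q ^ 2) * AT.xi (q ^ 2))
        = RingQuot.mkAlgHom ℂ (TRel (q ^ 2))
            ((-q) • (FreeAlgebra.ι ℂ TGen.yi * FreeAlgebra.ι ℂ TGen.xi)) := by
      rw [map_smul, map_mul]; rfl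
    show g1 q hq ((AT.yi 1 * AT.xi 1)) + g2 q hq ((-q) • (AT.yi (q ^ 2) * AT.xi (q ^ 2))) = Di q
    rw [ex, ex2, g1_mk hq, g2_mk hq, map_smul, map_mul, map_mul]
    simp only [L1, L2, FreeAlgebra.lift_ι_apply, G1, G2]
    have e1 : (Di q * a q) * (Di q * d q) = Di q * z q := by
      rw [mul_assoc, ← mul_assoc (a q) (Di q) (d q), ← Dia_comm hq, mul_assoc]; rfl
    have hDibc : Di q * (b q * c q) = (-q) • w q := by
      show _ = (-q) • ((-q⁻¹) • (Di q * (b q * c q)))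
      rw [smul_smul, show -q * -q⁻¹ = (1:ℂ) by field_simp, one_smul]
    have e2 : ((-q⁻¹) • (Di q * b q)) * ((-q) • (Di q * c q))
        = (q ^ 2)⁻¹ • (Di q * (Di q * (b q * c q))) := by
      rw [smul_mul_smul_comm, show -q⁻¹ * -q = (1:ℂ) by field_simp, one_smul,
        mul_assoc, ← mul_assoc (b q) (Di q) (c q), bDi_comm hq, smul_mul_assoc,
        mul_smul_comm, mul_assoc]
    rw [e1, e2, hDibc]
    simp only [mul_smul_comm, smul_smul]
    rw [show -q * ((q ^ 2)⁻¹ * -q) = (1:ℂ) by field_simp, one_smul]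
    have t1 : z q * (Di q * z q) = Di q * z q := by
      rw [← mul_assoc, z_comm_Di hq, mul_assoc, zz hq]
    have t2 : w q * (Di q * w q) = Di q * w q := by
      rw [← mul_assoc, w_central hq (Di q), mul_assoc, ww hq]
    rw [t1, t2, ← mul_add, zw1, mul_one]
  · -- mul
    intro u v ihu ihv
    rw [map_mul, Φ_mul hq, ihu, ihv]
  · -- add
    intro u v ihu ihv
    rw [map_add, Φ_add hq, ihu, ihv]

lemma rightInv : ∀ p : AT 1 × AT (q ^ 2), Ψ0 q hq (Φ q hq p) = p := by
  intro p
  obtain ⟨f1, e1⟩ := RingQuot.mkAlgHom_surjective ℂ (TRel 1) p.1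
  obtain ⟨f2, e2⟩ := RingQuot.mkAlgHom_surjective ℂ (TRel (q ^ 2)) p.2
  show Ψ0 q hq (g1 q hq p.1 + g2 q hq p.2) = p
  rw [← e1, ← e2, g1_mk hq, g2_mk hq, map_add, map_mul, map_mul, Ψ0_z hq, Ψ0_w hq,
    Ψ0_apply hq (L1 q f1), Ψ0_apply hq (L2 q f2), piL1, piL2 hq]
  rw [Prod.mk_mul_mk, Prod.mk_mul_mk, one_mul, zero_mul, zero_mul, one_mul,
    Prod.mk_add_mk, add_zero, zero_add]
  exact Prod.ext_iff.mpr ⟨e1, e2⟩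

end Main

/-! ### Star structure lemmas -/

lemma st_zero {A : Type} [Ring A] [Algebra ℂ A] (S : StarData A) : S.st 0 = 0 := by
  have h := S.smul 0 0
  rw [zero_smul, map_zero, zero_smul] at h
  exact h

lemma st_one {A : Type} [Ring A] [Algebra ℂ A] (S : StarData A) : S.st 1 = 1 := by
  have h1 : ∀ p : A, S.st p = S.st 1 * S.st p := by
    intro p
    calc S.st p = S.st (p * 1) := by rw [mul_one]
      _ = S.st 1 * S.st p := S.mul p 1
  have : (1 : A) = S.st 1 := by
    calc (1 : A) = S.st (S.st 1) := (S.invol 1).symm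
      _ = S.st 1 * S.st (S.st 1) := h1 _
      _ = S.st 1 * 1 := by rw [S.invol]
      _ = S.st 1 := mul_one _
  exact this.symm

lemma st_xi {r : ℂ} (S : ATStar r) : S.st (AT.xi r) = AT.x r := by
  rw [← S.stx]; exact S.invol _

lemma st_yi {r : ℂ} (S : ATStar r) : S.st (AT.yi r) = AT.y r := by
  rw [← S.sty]; exact S.invol _

private lemma neg_smul_AT {r : ℂ} (c : ℂ) (t : AT r) : -(c • t) = (-c) • t :=
  (neg_smul c t).symm

private lemma neg_smul_ADT {q : ℂ} (c : ℂ) (t : ADT q) : -(c • t) = (-c) • t :=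
  (neg_smul c t).symm

private lemma neg_smul_AT2 {q : ℂ} (c : ℂ) (t : AT 1 × AT (q ^ 2)) : (-c) • t = -(c • t) :=
  neg_smul c t

section Star
variable {q : ℂ} (hq : q ≠ 0) (hqn : ‖q‖ = 1)
open ADT

lemma conj_q (hqn : ‖q‖ = 1) : (starRingEnd ℂ) q = q⁻¹ := by
  rw [Complex.inv_def]
  simp [Complex.normSq_eq_norm_sq, hqn]

include hqn

lemma star_pres (stD : ADTStar q) (st1 : ATStar 1) (st2 : ATStar (q ^ 2)) :
    ∀ p : ADT q, Ψ0 q hq (stD.st p)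
      = (st1.st (Ψ0 q hq p).1, st2.st (Ψ0 q hq p).2) := by
  have hq2 : q ^ 2 ≠ 0 := pow_ne_zero 2 hq
  apply adt_induction
  · -- scalars
    intro r
    refine Prod.ext_iff.mpr ⟨?_, ?_⟩
    · show π1 q (stD.st (algebraMap ℂ (ADT q) r)) = st1.st (π1 q (algebraMap ℂ (ADT q) r))
      rw [Algebra.algebraMap_eq_smul_one (A := ADT q) r, stD.smul, st_one stD.toStarData]
      simp only [map_smul, map_one]
      rw [st1.smul, st_one st1.toStarData]
    · show π2 q hq (stD.st (algebraMap ℂ (ADT q) r))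
          = st2.st (π2 q hq (algebraMap ℂ (ADT q) r))
      rw [Algebra.algebraMap_eq_smul_one (A := ADT q) r, stD.smul, st_one stD.toStarData]
      simp only [map_smul, map_one]
      rw [st2.smul, st_one st2.toStarData]
  · -- a
    refine Prod.ext_iff.mpr ⟨?_, ?_⟩
    · show π1 q (stD.st (a q)) = st1.st (π1 q (a q))
      rw [stD.sta, map_mul, π1_Di, π1_d, π1_a, st1.stx, mul_assoc,
        AT.xi_y one_ne_zero, inv_one, one_smul, AT.yi_y_cancel]
    · show π2 q hq (stD.st (a q)) = st2.st (π2 q hq (a q))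
      rw [stD.sta, map_mul, π2_d hq, mul_zero, π2_a hq, st_zero st2.toStarData]
  · -- b
    refine Prod.ext_iff.mpr ⟨?_, ?_⟩
    · show π1 q (stD.st (b q)) = st1.st (π1 q (b q))
      rw [stD.stb, neg_smul_ADT, map_smul, map_mul, π1_c, mul_zero, smul_zero,
        π1_b, st_zero st1.toStarData]
    · show π2 q hq (stD.st (b q)) = st2.st (π2 q hq (b q))
      rw [stD.stb, neg_smul_ADT, map_smul, map_mul, π2_Di hq, π2_c hq, π2_b hq, st2.stx]
      simp only [smul_mul_assoc, mul_assoc, smul_smul]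
      rw [AT.yixiy hq2, smul_smul,
        show -q * -q * (q ^ 2)⁻¹ = (1:ℂ) by
          rw [show -q * -q = q ^ 2 by ring, mul_inv_cancel₀ hq2], one_smul]
  · -- c
    refine Prod.ext_iff.mpr ⟨?_, ?_⟩
    · show π1 q (stD.st (c q)) = st1.st (π1 q (c q))
      rw [stD.stc, neg_smul_ADT, map_smul, map_mul, π1_b, mul_zero, smul_zero,
        π1_c, st_zero st1.toStarData]
    · show π2 q hq (stD.st (c q)) = st2.st (π2 q hq (c q))
      rw [stD.stc, neg_smul_ADT, map_smul, map_mul, π2_Di hq, π2_b hq, π2_c hq, st2.sty]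
      simp only [smul_mul_assoc, mul_assoc, smul_smul]
      rw [AT.xi_x, mul_one,
        show -q⁻¹ * -q = (1:ℂ) by field_simp, one_smul]
  · -- d
    refine Prod.ext_iff.mpr ⟨?_, ?_⟩
    · show π1 q (stD.st (d q)) = st1.st (π1 q (d q))
      rw [stD.std, map_mul, π1_Di, π1_a, π1_d, st1.sty, mul_assoc, AT.xi_x, mul_one]
    · show π2 q hq (stD.st (d q)) = st2.st (π2 q hq (d q))
      rw [stD.std, map_mul, π2_a hq, mul_zero, π2_d hq, st_zero st2.toStarData]
  · -- D
    refine Prod.ext_iff.mpr ⟨?_, ?_⟩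
    · show π1 q (stD.st (D q)) = st1.st (π1 q (D q))
      rw [stD.stD, π1_Di, π1_D, st1.mul, st1.stx, st1.sty]
    · show π2 q hq (stD.st (D q)) = st2.st (π2 q hq (D q))
      rw [stD.stD, π2_Di hq, π2_D hq, st2.smul, st2.mul, st2.stx, st2.sty,
        map_neg, map_inv₀, conj_q hqn, inv_inv]
  · -- Di
    refine Prod.ext_iff.mpr ⟨?_, ?_⟩
    · show π1 q (stD.st (Di q)) = st1.st (π1 q (Di q))
      rw [stD.stDi, π1_D, π1_Di, st1.mul, st_xi st1, st_yi st1]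
    · show π2 q hq (stD.st (Di q)) = st2.st (π2 q hq (Di q))
      rw [stD.stDi, π2_D hq, π2_Di hq, st2.smul, st2.mul, st_xi st2, st_yi st2,
        map_neg, conj_q hqn]
  · -- mul
    intro u v ihu ihv
    rw [stD.mul, map_mul, ihu, ihv, map_mul, Prod.fst_mul, Prod.snd_mul,
      st1.mul, st2.mul, Prod.mk_mul_mk]
  · -- add
    intro u v ihu ihv
    rw [stD.add, map_add, ihu, ihv, map_add, Prod.fst_add, Prod.snd_add,
      st1.add, st2.add, Prod.mk_add_mk]

end Star


end S19Aux
/-- There is a `*`-algebra isomorphism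
`Ψ : A(DT²_q) ≅ A(T²) × A(T²_{q²})` with `Ψ(a) = (u,0)`, `Ψ(d) = (v,0)`, `Ψ(b) = (0,x)`,
`Ψ(c) = (0,y)`, `Ψ(D) = (uv, −q⁻¹xy)`; in particular `Ψ(z) = (1,0)`: the quantum
double-torus is the disjoint union of the classical torus `T²` and the quantum torus
`T²_{q²}`. -/
theorem statement_19 (q : ℂ) (hq : ‖q‖ = 1)
    (stD : ADTStar q) (st1 : ATStar 1) (st2 : ATStar (q ^ 2)) :
    ∃ Ψ : ADT q ≃ₐ[ℂ] (AT 1 × AT (q ^ 2)),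
      Ψ (ADT.a q) = (AT.x 1, 0)
      ∧ Ψ (ADT.d q) = (AT.y 1, 0)
      ∧ Ψ (ADT.b q) = (0, AT.x (q ^ 2))
      ∧ Ψ (ADT.c q) = (0, AT.y (q ^ 2))
      ∧ Ψ (ADT.D q) = (AT.x 1 * AT.y 1, -(q⁻¹ • (AT.x (q ^ 2) * AT.y (q ^ 2))))
      -- `Ψ` is `*`-preserving
      ∧ (∀ p : ADT q, Ψ (stD.st p) = (st1.st (Ψ p).1, st2.st (Ψ p).2))
      -- `Ψ(z) = (1, 0)`
      ∧ Ψ (ADT.z q) = (1, 0) := by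
  have hq0 : q ≠ 0 := by
    intro h; rw [h] at hq; norm_num at hq
  have hi : Function.Injective (Ψ0 q hq0) := by
    intro u v huv; rw [← leftInv hq0 u, ← leftInv hq0 v, huv]
  have hs : Function.Surjective (Ψ0 q hq0) := fun p => ⟨Φ q hq0 p, rightInv hq0 p⟩
  have hb : Function.Bijective (Ψ0 q hq0) := ⟨hi, hs⟩
  refine ⟨AlgEquiv.ofBijective (Ψ0 q hq0)
    hb, ?_, ?_, ?_, ?_, ?_, ?_, ?_⟩
  · rw [AlgEquiv.coe_ofBijective, Ψ0_apply hq0, π1_a, π2_a hq0]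
  · rw [AlgEquiv.coe_ofBijective, Ψ0_apply hq0, π1_d, π2_d hq0]
  · rw [AlgEquiv.coe_ofBijective, Ψ0_apply hq0, π1_b, π2_b hq0]
  · rw [AlgEquiv.coe_ofBijective, Ψ0_apply hq0, π1_c, π2_c hq0]
  · rw [AlgEquiv.coe_ofBijective, Ψ0_apply hq0, π1_D, π2_D hq0]
    exact Prod.ext_iff.mpr ⟨rfl, (neg_smul_AT q⁻¹ _).symm⟩
  · intro p
    rw [AlgEquiv.coe_ofBijective]
    exact star_pres hq0 hq stD st1 st2 p
  · rw [AlgEquiv.coe_ofBijective]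
    exact Ψ0_z hq0

end QDT
end
end
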